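/- arXiv:2403.15808 — 6 statements merged into one kernel-verified Lean document; each statement's English description precedes it below -/
import Mathlib

section
/- For every graphon W, m(K₃, W) = 1/4 + 3·∫₀¹ h(x)² dx, where h(x) = ∫₀¹ W(x,y) dy − 1/2. In particular m(K₃, W) ≥ 1/4, i.e., the triangle is common. -/
open MeasureTheory
noncomputable section

/-- a graphon: symmetric measurable `W` with values in `[0,1]`. -/
def IsGraphon (W : ℝ → ℝ → ℝ) : Prop :=
  Measurable (Function.uncurry W) ∧ (∀ x y, W x y = W y x) ∧ ∀ x y, W x y ∈ Set.Icc (0:ℝ) 1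

/-- the complementary graphon `1 - W`. -/
def cW (W : ℝ → ℝ → ℝ) : ℝ → ℝ → ℝ := fun x y => 1 - W x y

/-- homomorphism density of the star `S_k` with `k` leaves. -/
def tS (k : ℕ) (W : ℝ → ℝ → ℝ) : ℝ :=
  ∫ x in Set.Icc (0:ℝ) 1, (∫ y in Set.Icc (0:ℝ) 1, W x y) ^ k

/-- monochromatic density of `S_k`. -/
def mS (k : ℕ) (W : ℝ → ℝ → ℝ) : ℝ := tS k W + tS k (cW W)

/-- homomorphism density of the triangular book `T_k = K_{1,1,k}`. -/
def tT (k : ℕ) (W : ℝ → ℝ → ℝ) : ℝ :=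
  ∫ x in Set.Icc (0:ℝ) 1, ∫ y in Set.Icc (0:ℝ) 1,
    W x y * (∫ z in Set.Icc (0:ℝ) 1, W x z * W y z) ^ k

/-- monochromatic density of `T_k`. -/
def mT (k : ℕ) (W : ℝ → ℝ → ℝ) : ℝ := tT k W + tT k (cW W)

/-- homomorphism density of the triangle `K_3`. -/
def tK3 (W : ℝ → ℝ → ℝ) : ℝ :=
  ∫ x in Set.Icc (0:ℝ) 1, ∫ y in Set.Icc (0:ℝ) 1, ∫ z in Set.Icc (0:ℝ) 1,
    W x y * W y z * W x z

/-- monochromatic triangle density. -/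
def mK3 (W : ℝ → ℝ → ℝ) : ℝ := tK3 W + tK3 (cW W)

/-- the normalized degree function `h(x) = deg(x) - 1/2`. -/
def hdeg (W : ℝ → ℝ → ℝ) (x : ℝ) : ℝ := (∫ y in Set.Icc (0:ℝ) 1, W x y) - 1/2

open Function Set

/-! Goodman's identity `abc + (1-a)(1-b)(1-c) = 1 - (c(1-a) + a(1-b) + b(1-c))`, applied to the
weights `a, b, c = W(x,y), W(y,z), W(x,z)` of a triangle `xyz`. As `W` is symmetric, the three
terms on the right are one cherry `W(x,z)(1 - W(x,y))` composed with the cyclic rotations of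
`(x, y, z)`, which preserve the product measure; integrating out the two leaves of that cherry
gives `∫ d(1-d)` for the degree function `d`, and `d(1-d) = 1/4 - (d - 1/2)²`. -/

section
variable {Ω : Type*} [MeasurableSpace Ω] {μ : Measure Ω}

lemma integral_integral_integral_eq_integral_prod [SFinite μ] {f : Ω → Ω → Ω → ℝ}
    (hf : Integrable (fun p => f p.1 p.2.1 p.2.2) (μ.prod (μ.prod μ))) :
    ∫ x, ∫ y, ∫ z, f x y z ∂μ ∂μ ∂μ = ∫ p, f p.1 p.2.1 p.2.2 ∂μ.prod (μ.prod μ) := by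
  rw [integral_prod _ hf]
  exact integral_congr_ae (hf.prod_right_ae.mono fun x hx => integral_integral hx)

lemma measurePreserving_rotate [SFinite μ] :
    MeasurePreserving (MeasurableEquiv.prodComm.trans MeasurableEquiv.prodAssoc :
      Ω × Ω × Ω ≃ᵐ Ω × Ω × Ω) (μ.prod (μ.prod μ)) (μ.prod (μ.prod μ)) :=
  (measurePreserving_prodAssoc μ μ μ).comp Measure.measurePreserving_swap

lemma integrable_comp_rotate [SFinite μ] {g : Ω × Ω × Ω → ℝ}
    (hg : Integrable g (μ.prod (μ.prod μ))) :
    Integrable (fun p => g (p.2.1, p.2.2, p.1)) (μ.prod (μ.prod μ)) :=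
  (measurePreserving_rotate.integrable_comp_emb (MeasurableEquiv.measurableEmbedding _)).mpr hg

lemma integral_add_comp_rotate_add_comp_rotate [SFinite μ] {g : Ω × Ω × Ω → ℝ}
    (hg : Integrable g (μ.prod (μ.prod μ))) :
    ∫ p, g p + g (p.2.1, p.2.2, p.1) + g (p.2.2, p.1, p.2.1) ∂μ.prod (μ.prod μ) =
      3 * ∫ p, g p ∂μ.prod (μ.prod μ) := by
  have hρ : ∫ p, g (p.2.1, p.2.2, p.1) ∂μ.prod (μ.prod μ) = ∫ p, g p ∂μ.prod (μ.prod μ) :=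
    measurePreserving_rotate.integral_comp' g
  have hρρ : ∫ p, g (p.2.2, p.1, p.2.1) ∂μ.prod (μ.prod μ) = ∫ p, g p ∂μ.prod (μ.prod μ) :=
    (measurePreserving_rotate.integral_comp' _).trans hρ
  have hgρ := integrable_comp_rotate hg
  rw [integral_add (f := fun p => g p + g (p.2.1, p.2.2, p.1)) (hg.add hgρ)
    (integrable_comp_rotate hgρ), integral_add hg hgρ, hρ, hρρ]
  ring

lemma integrable_of_mem_unitInterval {α : Type*} [MeasurableSpace α] {ν : Measure α}
    [IsFiniteMeasure ν] {f : α → ℝ} (hf : Measurable f) (h01 : ∀ x, f x ∈ unitInterval) :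
    Integrable f ν :=
  .of_bound hf.aestronglyMeasurable 1 (.of_forall fun x => by
    rw [Real.norm_of_nonneg (h01 x).1]; exact (h01 x).2)

variable [IsProbabilityMeasure μ] {W : Ω → Ω → ℝ}

lemma integral_mem_unitInterval {f : Ω → ℝ} (hf : Measurable f)
    (h01 : ∀ x, f x ∈ unitInterval) : ∫ x, f x ∂μ ∈ unitInterval :=
  ⟨integral_nonneg fun x => (h01 x).1, by
    simpa using integral_mono (μ := μ) (integrable_of_mem_unitInterval hf h01)
      (integrable_const 1) fun x => (h01 x).2⟩

lemma integral_cherry (hW : Measurable (uncurry W)) (hW01 : ∀ x y, W x y ∈ unitInterval) :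
    ∫ p, W p.1 p.2.2 * (1 - W p.1 p.2.1) ∂μ.prod (μ.prod μ) =
      ∫ x, (∫ y, W x y ∂μ) * (1 - ∫ y, W x y ∂μ) ∂μ := by
  rw [← integral_integral_integral_eq_integral_prod (f := fun x y z => W x z * (1 - W x y))
    (integrable_of_mem_unitInterval ((hW.comp (measurable_fst.prodMk measurable_snd.snd)).mul
      (measurable_const.sub (hW.comp (measurable_fst.prodMk measurable_snd.fst))))
    fun p => unitInterval.mul_mem (hW01 _ _) (Icc.mem_iff_one_sub_mem.mp (hW01 _ _)))]
  refine integral_congr_ae (.of_forall fun x => ?_)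
  have hWx : Integrable (W x) μ :=
    integrable_of_mem_unitInterval (hW.comp measurable_prodMk_left) (hW01 x)
  simp only [integral_const_mul, integral_mul_const]
  simp [integral_sub (integrable_const 1) hWx]

lemma integral_triangle_add_integral_compl (hW : Measurable (uncurry W))
    (hsymm : ∀ x y, W x y = W y x) (hW01 : ∀ x y, W x y ∈ unitInterval) :
    (∫ x, ∫ y, ∫ z, W x y * W y z * W x z ∂μ ∂μ ∂μ) +
        ∫ x, ∫ y, ∫ z, (1 - W x y) * (1 - W y z) * (1 - W x z) ∂μ ∂μ ∂μ =
      1 - 3 * ∫ x, (∫ y, W x y ∂μ) * (1 - ∫ y, W x y ∂μ) ∂μ := by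
  have hint : ∀ {f : Ω × Ω × Ω → ℝ}, Measurable f → (∀ p, f p ∈ unitInterval) →
      Integrable f (μ.prod (μ.prod μ)) := integrable_of_mem_unitInterval
  have hWc : ∀ x y, 1 - W x y ∈ unitInterval := fun x y =>
    Icc.mem_iff_one_sub_mem.mp (hW01 x y)
  have hxy : Measurable fun p : Ω × Ω × Ω => W p.1 p.2.1 :=
    hW.comp (measurable_fst.prodMk measurable_snd.fst)
  have hyz : Measurable fun p : Ω × Ω × Ω => W p.2.1 p.2.2 := hW.comp measurable_snd
  have hxz : Measurable fun p : Ω × Ω × Ω => W p.1 p.2.2 :=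
    hW.comp (measurable_fst.prodMk measurable_snd.snd)
  have htri : Integrable (fun p : Ω × Ω × Ω => W p.1 p.2.1 * W p.2.1 p.2.2 * W p.1 p.2.2)
      (μ.prod (μ.prod μ)) :=
    hint ((hxy.mul hyz).mul hxz) fun p =>
      unitInterval.mul_mem (unitInterval.mul_mem (hW01 _ _) (hW01 _ _)) (hW01 _ _)
  have htri' : Integrable
      (fun p : Ω × Ω × Ω => (1 - W p.1 p.2.1) * (1 - W p.2.1 p.2.2) * (1 - W p.1 p.2.2))
      (μ.prod (μ.prod μ)) :=
    hint (((measurable_const.sub hxy).mul (measurable_const.sub hyz)).mul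
      (measurable_const.sub hxz))
      fun p => unitInterval.mul_mem (unitInterval.mul_mem (hWc _ _) (hWc _ _)) (hWc _ _)
  set g : Ω × Ω × Ω → ℝ := fun p => W p.1 p.2.2 * (1 - W p.1 p.2.1) with hg
  have hgi : Integrable g (μ.prod (μ.prod μ)) :=
    hint (hxz.mul (measurable_const.sub hxy)) fun p => unitInterval.mul_mem (hW01 _ _) (hWc _ _)
  have hcherries : Integrable (fun p => g p + g (p.2.1, p.2.2, p.1) + g (p.2.2, p.1, p.2.1))
      (μ.prod (μ.prod μ)) :=
    (hgi.add (integrable_comp_rotate hgi)).add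
      (integrable_comp_rotate (integrable_comp_rotate hgi))
  rw [integral_integral_integral_eq_integral_prod htri,
    integral_integral_integral_eq_integral_prod htri',
    ← integral_add htri htri', ← integral_cherry hW hW01,
    ← integral_add_comp_rotate_add_comp_rotate hgi]
  calc _ = ∫ p, 1 - (g p + g (p.2.1, p.2.2, p.1) + g (p.2.2, p.1, p.2.1))
          ∂μ.prod (μ.prod μ) := by
        refine integral_congr_ae (.of_forall fun p => ?_)
        simp only [hg, hsymm p.2.1 p.1, hsymm p.2.2 p.2.1, hsymm p.2.2 p.1]
        ring
    _ = _ := by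
        rw [integral_sub (integrable_const 1) hcherries]
        simp

lemma integral_sub_half_sq {f : Ω → ℝ} (hf : Integrable (fun x => f x * (1 - f x)) μ) :
    ∫ x, (f x - 1 / 2) ^ 2 ∂μ = 1 / 4 - ∫ x, f x * (1 - f x) ∂μ := by
  calc ∫ x, (f x - 1 / 2) ^ 2 ∂μ = ∫ x, 1 / 4 - f x * (1 - f x) ∂μ :=
        integral_congr_ae (.of_forall fun x => by ring)
    _ = _ := by simp [integral_sub (integrable_const _) hf]

theorem integral_triangle_add_integral_compl_eq (hW : Measurable (uncurry W))
    (hsymm : ∀ x y, W x y = W y x) (hW01 : ∀ x y, W x y ∈ unitInterval) :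
    (∫ x, ∫ y, ∫ z, W x y * W y z * W x z ∂μ ∂μ ∂μ) +
        ∫ x, ∫ y, ∫ z, (1 - W x y) * (1 - W y z) * (1 - W x z) ∂μ ∂μ ∂μ =
      1 / 4 + 3 * ∫ x, ((∫ y, W x y ∂μ) - 1 / 2) ^ 2 ∂μ := by
  have hd : Measurable fun x => ∫ y, W x y ∂μ :=
    hW.stronglyMeasurable.integral_prod_right.measurable
  have hd01 : ∀ x, ∫ y, W x y ∂μ ∈ unitInterval := fun x =>
    integral_mem_unitInterval (hW.comp measurable_prodMk_left) (hW01 x)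
  rw [integral_triangle_add_integral_compl hW hsymm hW01, integral_sub_half_sq
    (integrable_of_mem_unitInterval (hd.mul (measurable_const.sub hd)) fun x =>
      unitInterval.mul_mem (hd01 x) (Icc.mem_iff_one_sub_mem.mp (hd01 x)))]
  ring

end

/-- `m(K₃,W) = 1/4 + 3∫h²`; in particular `m(K₃,W) ≥ 1/4`,
i.e. the triangle is common. -/
theorem stmt8 (W : ℝ → ℝ → ℝ) (hW : IsGraphon W) :
    (mK3 W = 1/4 + 3 * ∫ x in Set.Icc (0:ℝ) 1, hdeg W x ^ 2) ∧ mK3 W ≥ 1/4 := by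
  obtain ⟨hWm, hsymm, hW01⟩ := hW
  have : IsProbabilityMeasure (volume.restrict (Icc (0:ℝ) 1)) := ⟨by simp⟩
  have hm : mK3 W = 1/4 + 3 * ∫ x in Set.Icc (0:ℝ) 1, hdeg W x ^ 2 :=
    integral_triangle_add_integral_compl_eq hWm hsymm hW01
  have hsq : 0 ≤ ∫ x in Set.Icc (0:ℝ) 1, hdeg W x ^ 2 := integral_nonneg fun x => sq_nonneg _
  exact ⟨hm, by linarith⟩
end
end

section
/- For every graphon W and every positive integer k, the monochromatic density of the triangular book T_k satisfies m(T_k, W) ≥ m(K₃, W)^k ≥ 2^(−2k); in particular every triangular book T_k is common. -/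
open MeasureTheory Set Function
noncomputable section

def μ01 : Measure ℝ := volume.restrict (Set.Icc (0:ℝ) 1)
instance : IsProbabilityMeasure μ01 := ⟨by simp [μ01, Real.volume_Icc]⟩
def π2 : Measure (ℝ × ℝ) := μ01.prod μ01
instance : IsProbabilityMeasure π2 := by unfold π2; infer_instance

lemma int01 {α : Type*} [MeasurableSpace α] {ν : Measure α} [IsFiniteMeasure ν]
    {f : α → ℝ} (hf : AEStronglyMeasurable f ν) (h : ∀ x, f x ∈ Set.Icc (0:ℝ) 1) :
    Integrable f ν :=
  (integrable_const (1:ℝ)).mono' hf (Filter.Eventually.of_forall fun x => by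
    rw [Real.norm_eq_abs, abs_le]; exact ⟨by linarith [(h x).1], (h x).2⟩)

lemma integral_mem01 {α : Type*} [MeasurableSpace α] {ν : Measure α} [IsProbabilityMeasure ν]
    {f : α → ℝ} (hf : AEStronglyMeasurable f ν) (h : ∀ x, f x ∈ Set.Icc (0:ℝ) 1) :
    (∫ x, f x ∂ν) ∈ Set.Icc (0:ℝ) 1 := by
  constructor
  · exact integral_nonneg fun x => (h x).1
  · calc ∫ x, f x ∂ν ≤ ∫ _x, (1:ℝ) ∂ν :=
        integral_mono (int01 hf h) (integrable_const 1) (fun x => (h x).2)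
    _ = 1 := by simp

lemma jensen_pow {α : Type*} [MeasurableSpace α] {ν : Measure α} [IsProbabilityMeasure ν]
    (k : ℕ) {f : α → ℝ} (hf : AEStronglyMeasurable f ν) (h : ∀ x, f x ∈ Set.Icc (0:ℝ) 1) :
    (∫ x, f x ∂ν) ^ k ≤ ∫ x, f x ^ k ∂ν := by
  have hfi := int01 hf h
  have hgi : Integrable ((fun t : ℝ => t ^ k) ∘ f) ν :=
    int01 ((continuous_pow k).comp_aestronglyMeasurable hf)
      fun x => ⟨pow_nonneg (h x).1 k, pow_le_one₀ (h x).1 (h x).2⟩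
  exact (convexOn_pow k).map_integral_le ((continuous_pow k).continuousOn) isClosed_Ici
    (Filter.Eventually.of_forall fun x => Set.mem_Ici.2 (h x).1) hfi hgi

section Graphon
variable {W : ℝ → ℝ → ℝ}

def Fd (W : ℝ → ℝ → ℝ) : ℝ × ℝ → ℝ := fun p => ∫ z, W p.1 z * W p.2 z ∂μ01
def deg (W : ℝ → ℝ → ℝ) (x : ℝ) : ℝ := ∫ y, W x y ∂μ01

lemma cW_meas (hWm : Measurable (uncurry W)) : Measurable (uncurry (cW W)) := by
  have : uncurry (cW W) = fun p : ℝ × ℝ => 1 - uncurry W p := rfl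
  rw [this]; exact measurable_const.sub hWm

lemma cW_mem (hWb : ∀ x y, W x y ∈ Icc (0:ℝ) 1) : ∀ x y, cW W x y ∈ Icc (0:ℝ) 1 :=
  fun x y => ⟨by simp [cW]; linarith [(hWb x y).2], by simp [cW]; linarith [(hWb x y).1]⟩

lemma sect_meas (hWm : Measurable (uncurry W)) (x : ℝ) : Measurable (W x) :=
  hWm.comp measurable_prodMk_left

lemma measurable_Fd (hWm : Measurable (uncurry W)) : Measurable (Fd W) := by
  have hg : StronglyMeasurable (fun q : (ℝ × ℝ) × ℝ => W q.1.1 q.2 * W q.1.2 q.2) :=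
    ((hWm.comp ((measurable_fst.fst).prodMk measurable_snd)).mul
      (hWm.comp ((measurable_fst.snd).prodMk measurable_snd))).stronglyMeasurable
  exact hg.integral_prod_right'.measurable

lemma measurable_deg (hWm : Measurable (uncurry W)) : Measurable (deg W) :=
  hWm.stronglyMeasurable.integral_prod_right'.measurable

lemma sect_int (hWm : Measurable (uncurry W)) (hWb : ∀ x y, W x y ∈ Icc (0:ℝ) 1) (x : ℝ) :
    Integrable (W x) μ01 :=
  int01 (sect_meas hWm x).aestronglyMeasurable (hWb x)

lemma Fd_mem (hWm : Measurable (uncurry W)) (hWb : ∀ x y, W x y ∈ Icc (0:ℝ) 1)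
    (p : ℝ × ℝ) : Fd W p ∈ Icc (0:ℝ) 1 :=
  integral_mem01 ((sect_meas hWm p.1).mul (sect_meas hWm p.2)).aestronglyMeasurable
    fun z => ⟨mul_nonneg (hWb _ _).1 (hWb _ _).1,
      by nlinarith [(hWb p.1 z).1, (hWb p.1 z).2, (hWb p.2 z).1, (hWb p.2 z).2]⟩

lemma deg_mem (hWm : Measurable (uncurry W)) (hWb : ∀ x y, W x y ∈ Icc (0:ℝ) 1)
    (x : ℝ) : deg W x ∈ Icc (0:ℝ) 1 :=
  integral_mem01 (sect_meas hWm x).aestronglyMeasurable fun y => hWb x y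

lemma phi_mem (hWm : Measurable (uncurry W)) (hWb : ∀ x y, W x y ∈ Icc (0:ℝ) 1) (k : ℕ)
    (p : ℝ × ℝ) : W p.1 p.2 * Fd W p ^ k ∈ Icc (0:ℝ) 1 := by
  have h1 := hWb p.1 p.2
  have h2 : Fd W p ^ k ∈ Icc (0:ℝ) 1 :=
    ⟨pow_nonneg (Fd_mem hWm hWb p).1 k, pow_le_one₀ (Fd_mem hWm hWb p).1 (Fd_mem hWm hWb p).2⟩
  exact ⟨mul_nonneg h1.1 h2.1, by nlinarith [h1.1, h1.2, h2.1, h2.2]⟩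

lemma phi_meas (hWm : Measurable (uncurry W)) (k : ℕ) :
    Measurable (fun p : ℝ × ℝ => W p.1 p.2 * Fd W p ^ k) :=
  hWm.mul ((measurable_Fd hWm).pow_const k)

lemma phi_int (hWm : Measurable (uncurry W)) (hWb : ∀ x y, W x y ∈ Icc (0:ℝ) 1) (k : ℕ) :
    Integrable (fun p : ℝ × ℝ => W p.1 p.2 * Fd W p ^ k) π2 :=
  int01 (phi_meas hWm k).aestronglyMeasurable (phi_mem hWm hWb k)

lemma tT_rep (hWm : Measurable (uncurry W)) (hWb : ∀ x y, W x y ∈ Icc (0:ℝ) 1) (k : ℕ) :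
    tT k W = ∫ p, W p.1 p.2 * Fd W p ^ k ∂π2 := by
  have hint : Integrable (uncurry fun x y => W x y * Fd W (x, y) ^ k) π2 := phi_int hWm hWb k
  exact integral_integral (μ := μ01) (ν := μ01) hint

lemma mT_rep (hWm : Measurable (uncurry W)) (hWb : ∀ x y, W x y ∈ Icc (0:ℝ) 1) (k : ℕ) :
    mT k W = ∫ p, (W p.1 p.2 * Fd W p ^ k + (1 - W p.1 p.2) * Fd (cW W) p ^ k) ∂π2 := by
  rw [mT, tT_rep hWm hWb k, tT_rep (cW_meas hWm) (cW_mem hWb) k,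
    ← integral_add (phi_int hWm hWb k) (phi_int (cW_meas hWm) (cW_mem hWb) k)]
  rfl

lemma mT_ge_pow (hWm : Measurable (uncurry W)) (hWb : ∀ x y, W x y ∈ Icc (0:ℝ) 1) (k : ℕ) :
    mT k W ≥ mT 1 W ^ k := by
  have hWm' := cW_meas hWm
  have hWb' := cW_mem hWb
  have hFb := Fd_mem hWm hWb
  have hGb := Fd_mem hWm' hWb'
  set ψ : ℝ × ℝ → ℝ := fun p => W p.1 p.2 * Fd W p + (1 - W p.1 p.2) * Fd (cW W) p with hψ
  have hψmeas : Measurable ψ :=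
    (hWm.mul (measurable_Fd hWm)).add
      ((measurable_const.sub hWm).mul (measurable_Fd hWm'))
  have hψmem : ∀ p, ψ p ∈ Icc (0:ℝ) 1 := fun p => by
    have h1 := hWb p.1 p.2
    simp only [hψ]
    constructor
    · exact add_nonneg (mul_nonneg h1.1 (hFb p).1) (mul_nonneg (by linarith [h1.2]) (hGb p).1)
    · nlinarith [(hFb p).1, (hFb p).2, (hGb p).1, (hGb p).2, h1.1, h1.2]
  have hψkmem : ∀ p, ψ p ^ k ∈ Icc (0:ℝ) 1 := fun p =>
    ⟨pow_nonneg (hψmem p).1 k, pow_le_one₀ (hψmem p).1 (hψmem p).2⟩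
  have step1 : mT k W ≥ ∫ p, ψ p ^ k ∂π2 := by
    rw [mT_rep hWm hWb k]
    refine integral_mono (int01 (hψmeas.pow_const k).aestronglyMeasurable hψkmem)
      ((phi_int hWm hWb k).add (phi_int hWm' hWb' k)) fun p => ?_
    have h1 := hWb p.1 p.2
    have := (convexOn_pow (𝕜 := ℝ) k).2 (Set.mem_Ici.2 (hFb p).1)
      (Set.mem_Ici.2 (hGb p).1) h1.1
      (show (0:ℝ) ≤ 1 - W p.1 p.2 by linarith [h1.2]) (by ring)
    simpa [hψ, smul_eq_mul, cW] using this
  have step2 : (∫ p, ψ p ∂π2) ^ k ≤ ∫ p, ψ p ^ k ∂π2 :=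
    jensen_pow k hψmeas.aestronglyMeasurable hψmem
  have step3 : mT 1 W = ∫ p, ψ p ∂π2 := by
    rw [mT_rep hWm hWb 1]; simp only [pow_one, hψ]
  calc mT k W ≥ ∫ p, ψ p ^ k ∂π2 := step1
    _ ≥ (∫ p, ψ p ∂π2) ^ k := step2
    _ = mT 1 W ^ k := by rw [step3]

lemma tK3_eq_tT1 (V : ℝ → ℝ → ℝ) : tK3 V = tT 1 V := by
  unfold tK3 tT
  congr 1; funext x; congr 1; funext y
  rw [pow_one, ← integral_const_mul]
  congr 1; funext z; ring

lemma mK3_eq_mT1 (V : ℝ → ℝ → ℝ) : mK3 V = mT 1 V := by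
  rw [mK3, mT, tK3_eq_tT1, tK3_eq_tT1]
lemma inner_one_sub (hWm : Measurable (uncurry W)) (hWb : ∀ x y, W x y ∈ Icc (0:ℝ) 1)
    (x : ℝ) : (∫ y, (1 - W x y) ∂μ01) = 1 - deg W x := by
  rw [integral_sub (integrable_const 1) (sect_int hWm hWb x), integral_const]
  simp [deg]

lemma goodman (hWm : Measurable (uncurry W)) (hWs : ∀ x y, W x y = W y x)
    (hWb : ∀ x y, W x y ∈ Icc (0:ℝ) 1) : mT 1 W ≥ 1/4 := by
  have hdm := measurable_deg hWm
  have hdb := deg_mem hWm hWb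
  have hdint : Integrable (deg W) μ01 := int01 hdm.aestronglyMeasurable hdb
  have hd2int : Integrable (fun x => deg W x ^ 2) μ01 :=
    int01 (hdm.pow_const 2).aestronglyMeasurable
      fun x => ⟨pow_nonneg (hdb x).1 2, pow_le_one₀ (hdb x).1 (hdb x).2⟩
  have hFdc : ∀ p : ℝ × ℝ, Fd (cW W) p = 1 - deg W p.1 - deg W p.2 + Fd W p := fun p => by
    have ix := sect_int hWm hWb p.1
    have iy := sect_int hWm hWb p.2
    have ixy : Integrable (fun z => W p.1 z * W p.2 z) μ01 :=
      int01 ((sect_meas hWm p.1).mul (sect_meas hWm p.2)).aestronglyMeasurable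
        fun z => ⟨mul_nonneg (hWb _ _).1 (hWb _ _).1,
          by nlinarith [(hWb p.1 z).1, (hWb p.1 z).2, (hWb p.2 z).1, (hWb p.2 z).2]⟩
    have i1 : Integrable (fun z => (1:ℝ) - W p.1 z) μ01 := (integrable_const 1).sub ix
    have i2 : Integrable (fun z => (1:ℝ) - W p.1 z - W p.2 z) μ01 := i1.sub iy
    have h0 : Fd (cW W) p = ∫ z, ((1:ℝ) - W p.1 z - W p.2 z + W p.1 z * W p.2 z) ∂μ01 := by
      show (∫ z, (1 - W p.1 z) * (1 - W p.2 z) ∂μ01) = _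
      congr 1; funext z; ring
    have e1 : ∫ z, ((1:ℝ) - W p.1 z - W p.2 z + W p.1 z * W p.2 z) ∂μ01
        = (∫ z, ((1:ℝ) - W p.1 z - W p.2 z) ∂μ01) + ∫ z, (W p.1 z * W p.2 z) ∂μ01 :=
      integral_add i2 ixy
    have e2 : ∫ z, ((1:ℝ) - W p.1 z - W p.2 z) ∂μ01
        = (∫ z, ((1:ℝ) - W p.1 z) ∂μ01) - ∫ z, W p.2 z ∂μ01 := integral_sub i1 iy
    have e3 : ∫ z, ((1:ℝ) - W p.1 z) ∂μ01 = (∫ z, (1:ℝ) ∂μ01) - ∫ z, W p.1 z ∂μ01 :=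
      integral_sub (integrable_const 1) ix
    have e4 : ∫ z, (1:ℝ) ∂μ01 = 1 := by simp
    rw [h0, e1, e2, e3, e4]
    rfl
  -- the four basic integrals over π2
  have meas_inner : Measurable (fun q : (ℝ × ℝ) × ℝ => W q.1.1 q.2 * W q.1.2 q.2) :=
    (hWm.comp ((measurable_fst.fst).prodMk measurable_snd)).mul
      (hWm.comp ((measurable_fst.snd).prodMk measurable_snd))
  have hA : ∫ p, Fd W p ∂π2 = ∫ z, deg W z ^ 2 ∂μ01 := by
    have hint : Integrable (fun q : (ℝ × ℝ) × ℝ => W q.1.1 q.2 * W q.1.2 q.2) (π2.prod μ01) :=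
      int01 meas_inner.aestronglyMeasurable fun q =>
        ⟨mul_nonneg (hWb _ _).1 (hWb _ _).1,
          by nlinarith [(hWb q.1.1 q.2).1, (hWb q.1.1 q.2).2, (hWb q.1.2 q.2).1,
            (hWb q.1.2 q.2).2]⟩
    calc ∫ p, Fd W p ∂π2
        = ∫ z, ∫ p : ℝ × ℝ, W p.1 z * W p.2 z ∂π2 ∂μ01 :=
          integral_integral_swap (f := fun (p : ℝ × ℝ) z => W p.1 z * W p.2 z) hint
      _ = ∫ z, deg W z ^ 2 ∂μ01 := by
          refine integral_congr_ae (Filter.Eventually.of_forall fun z => ?_)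
          show (∫ p : ℝ × ℝ, W p.1 z * W p.2 z ∂π2) = deg W z ^ 2
          have h1 : (∫ p : ℝ × ℝ, W p.1 z * W p.2 z ∂π2)
              = (∫ x, W x z ∂μ01) * ∫ y, W y z ∂μ01 :=
            integral_prod_mul (f := fun x => W x z) (g := fun y => W y z)
          have hsz : (∫ x, W x z ∂μ01) = deg W z := by
            rw [show (fun x => W x z) = W z from funext fun x => hWs x z]; rfl
          rw [h1, hsz, ← pow_two]
  have intB : Integrable (fun p : ℝ × ℝ => 1 - W p.1 p.2) π2 :=
    int01 (measurable_const.sub hWm).aestronglyMeasurable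
      fun p => ⟨by linarith [(hWb p.1 p.2).2], by linarith [(hWb p.1 p.2).1]⟩
  have intC : Integrable (fun p : ℝ × ℝ => (1 - W p.1 p.2) * deg W p.1) π2 :=
    int01 ((measurable_const.sub hWm).mul (hdm.comp measurable_fst)).aestronglyMeasurable
      fun p => ⟨mul_nonneg (by linarith [(hWb p.1 p.2).2]) (hdb p.1).1,
        by nlinarith [(hWb p.1 p.2).1, (hWb p.1 p.2).2, (hdb p.1).1, (hdb p.1).2]⟩
  have intD : Integrable (fun p : ℝ × ℝ => (1 - W p.1 p.2) * deg W p.2) π2 :=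
    int01 ((measurable_const.sub hWm).mul (hdm.comp measurable_snd)).aestronglyMeasurable
      fun p => ⟨mul_nonneg (by linarith [(hWb p.1 p.2).2]) (hdb p.2).1,
        by nlinarith [(hWb p.1 p.2).1, (hWb p.1 p.2).2, (hdb p.2).1, (hdb p.2).2]⟩
  have intF : Integrable (Fd W) π2 :=
    int01 (measurable_Fd hWm).aestronglyMeasurable (Fd_mem hWm hWb)
  have hB : ∫ p : ℝ × ℝ, (1 - W p.1 p.2) ∂π2 = ∫ x, (1 - deg W x) ∂μ01 := by
    calc ∫ p : ℝ × ℝ, (1 - W p.1 p.2) ∂π2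
        = ∫ x, ∫ y, (1 - W x y) ∂μ01 ∂μ01 :=
          (integral_integral (f := fun x y => 1 - W x y) intB).symm
      _ = ∫ x, (1 - deg W x) ∂μ01 :=
          integral_congr_ae (Filter.Eventually.of_forall fun x => inner_one_sub hWm hWb x)
  have hC : ∫ p : ℝ × ℝ, ((1 - W p.1 p.2) * deg W p.1) ∂π2
      = ∫ x, ((1 - deg W x) * deg W x) ∂μ01 := by
    calc ∫ p : ℝ × ℝ, ((1 - W p.1 p.2) * deg W p.1) ∂π2
        = ∫ x, ∫ y, ((1 - W x y) * deg W x) ∂μ01 ∂μ01 :=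
          (integral_integral (f := fun x y => (1 - W x y) * deg W x) intC).symm
      _ = ∫ x, ((1 - deg W x) * deg W x) ∂μ01 := by
          refine integral_congr_ae (Filter.Eventually.of_forall fun x => ?_)
          show (∫ y, ((1 - W x y) * deg W x) ∂μ01) = (1 - deg W x) * deg W x
          rw [integral_mul_const, inner_one_sub hWm hWb x]
  have hD : ∫ p : ℝ × ℝ, ((1 - W p.1 p.2) * deg W p.2) ∂π2
      = ∫ x, ((1 - deg W x) * deg W x) ∂μ01 := by
    calc ∫ p : ℝ × ℝ, ((1 - W p.1 p.2) * deg W p.2) ∂π2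
        = ∫ x, ∫ y, ((1 - W x y) * deg W y) ∂μ01 ∂μ01 :=
          (integral_integral (f := fun x y => (1 - W x y) * deg W y) intD).symm
      _ = ∫ y, ∫ x, ((1 - W x y) * deg W y) ∂μ01 ∂μ01 :=
          integral_integral_swap (f := fun x y => (1 - W x y) * deg W y) intD
      _ = ∫ x, ((1 - deg W x) * deg W x) ∂μ01 := by
          refine integral_congr_ae (Filter.Eventually.of_forall fun y => ?_)
          show (∫ x, ((1 - W x y) * deg W y) ∂μ01) = (1 - deg W y) * deg W y
          have hrow : (fun x => 1 - W x y) = fun x => 1 - W y x :=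
            funext fun x => by rw [hWs x y]
          rw [integral_mul_const, hrow, inner_one_sub hWm hWb y]
  -- assemble
  have intBC : Integrable (fun p : ℝ × ℝ => (1 - W p.1 p.2) - (1 - W p.1 p.2) * deg W p.1) π2 :=
    intB.sub intC
  have intBCD : Integrable (fun p : ℝ × ℝ => (1 - W p.1 p.2) - (1 - W p.1 p.2) * deg W p.1
      - (1 - W p.1 p.2) * deg W p.2) π2 := intBC.sub intD
  have hpoint : (fun p : ℝ × ℝ => W p.1 p.2 * Fd W p ^ 1 + (1 - W p.1 p.2) * Fd (cW W) p ^ 1)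
      = fun p => Fd W p + ((1 - W p.1 p.2) - (1 - W p.1 p.2) * deg W p.1
        - (1 - W p.1 p.2) * deg W p.2) := by
    funext p; rw [pow_one, pow_one, hFdc p]; ring
  have hrep : mT 1 W = ∫ p, (Fd W p + ((1 - W p.1 p.2) - (1 - W p.1 p.2) * deg W p.1
      - (1 - W p.1 p.2) * deg W p.2)) ∂π2 := by
    rw [mT_rep hWm hWb 1, hpoint]
  have e1 : ∫ p, (Fd W p + ((1 - W p.1 p.2) - (1 - W p.1 p.2) * deg W p.1
      - (1 - W p.1 p.2) * deg W p.2)) ∂π2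
      = (∫ p, Fd W p ∂π2) + ∫ p : ℝ × ℝ, ((1 - W p.1 p.2) - (1 - W p.1 p.2) * deg W p.1
      - (1 - W p.1 p.2) * deg W p.2) ∂π2 := integral_add intF intBCD
  have e2 : ∫ p : ℝ × ℝ, ((1 - W p.1 p.2) - (1 - W p.1 p.2) * deg W p.1
      - (1 - W p.1 p.2) * deg W p.2) ∂π2
      = (∫ p : ℝ × ℝ, ((1 - W p.1 p.2) - (1 - W p.1 p.2) * deg W p.1) ∂π2)
      - ∫ p : ℝ × ℝ, ((1 - W p.1 p.2) * deg W p.2) ∂π2 := integral_sub intBC intD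
  have e3 : ∫ p : ℝ × ℝ, ((1 - W p.1 p.2) - (1 - W p.1 p.2) * deg W p.1) ∂π2
      = (∫ p : ℝ × ℝ, (1 - W p.1 p.2) ∂π2)
      - ∫ p : ℝ × ℝ, ((1 - W p.1 p.2) * deg W p.1) ∂π2 := integral_sub intB intC
  rw [hrep, e1, e2, e3, hA, hB, hC, hD]
  set J := ∫ x, deg W x ∂μ01 with hJdef
  have hJ : J ∈ Icc (0:ℝ) 1 := integral_mem01 hdm.aestronglyMeasurable hdb
  have hK : J ^ 2 ≤ ∫ x, deg W x ^ 2 ∂μ01 := jensen_pow 2 hdm.aestronglyMeasurable hdb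
  have h1 : ∫ x, (1 - deg W x) ∂μ01 = 1 - J := by
    rw [integral_sub (integrable_const 1) hdint, integral_const]; simp [hJdef]
  have h2 : ∫ x, ((1 - deg W x) * deg W x) ∂μ01 = J - ∫ x, deg W x ^ 2 ∂μ01 := by
    have he : (fun x => (1 - deg W x) * deg W x) = fun x => deg W x - deg W x ^ 2 := by
      funext x; ring
    rw [he, integral_sub hdint hd2int]
  rw [h1, h2]
  nlinarith [hJ.1, hJ.2, hK, sq_nonneg (J - 1/2)]

end Graphon

/-- `m(T_k,W) ≥ m(K₃,W)^k ≥ 2^(-2k)`: every triangular book is common. -/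
theorem stmt9 (W : ℝ → ℝ → ℝ) (hW : IsGraphon W) (k : ℕ) (hk : 1 ≤ k) :
    mT k W ≥ mK3 W ^ k ∧ mK3 W ^ k ≥ (2:ℝ) ^ (-(2 * (k:ℤ))) := by
  obtain ⟨hWm, hWs, hWb⟩ := hW
  have hmain : mT k W ≥ mT 1 W ^ k := mT_ge_pow hWm hWb k
  have hG : mT 1 W ≥ 1/4 := goodman hWm hWs hWb
  have hmK : mK3 W = mT 1 W := mK3_eq_mT1 W
  refine ⟨by rw [hmK]; exact hmain, ?_⟩
  rw [hmK]
  have h24 : (2:ℝ) ^ (-(2 * (k:ℤ))) = (1/4 : ℝ) ^ k := by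
    rw [show -(2 * (k:ℤ)) = (-2) * (k:ℤ) by ring, zpow_mul, zpow_natCast]
    norm_num
  rw [h24]
  exact pow_le_pow_left₀ (by norm_num) hG k
end
end

section
/- For every k ∈ {1,2,3,4,5} and every graphon W, the inequality m(T_k, W) / m(S_k, W) ≥ 2^(−(k+1)) holds, i.e., m(T_k, W) ≥ 2^(−(k+1)) · m(S_k, W). -/
open MeasureTheory
noncomputable section

namespace BookAux

def bmu : Measure ℝ := volume.restrict (Set.Icc 0 1)

instance : IsProbabilityMeasure bmu := ⟨by simp [bmu, Real.volume_Icc]⟩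

lemma intb {f : ℝ → ℝ} {C : ℝ} (hm : Measurable f) (hb : ∀ x, |f x| ≤ C) :
    Integrable f bmu := by
  refine Integrable.mono' (integrable_const C) hm.aestronglyMeasurable ?_
  exact Filter.Eventually.of_forall (fun x => by simpa using hb x)

lemma intb01 {f : ℝ → ℝ} (hm : Measurable f) (h0 : ∀ x, 0 ≤ f x) (h1 : ∀ x, f x ≤ 1) :
    Integrable f bmu :=
  intb (C := 1) hm (fun x => abs_le.2 ⟨by linarith [h0 x], h1 x⟩)

lemma intb2 {F : ℝ × ℝ → ℝ} {C : ℝ} (hm : Measurable F) (hb : ∀ p, |F p| ≤ C) :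
    Integrable F (bmu.prod bmu) := by
  refine Integrable.mono' (integrable_const C) hm.aestronglyMeasurable ?_
  exact Filter.Eventually.of_forall (fun x => by simpa using hb x)

lemma my_swap (F : ℝ → ℝ → ℝ) {C : ℝ} (hm : Measurable (Function.uncurry F))
    (hb : ∀ x y, |F x y| ≤ C) :
    ∫ x, (∫ y, F x y ∂bmu) ∂bmu = ∫ y, (∫ x, F x y ∂bmu) ∂bmu :=
  integral_integral_swap (intb2 hm (fun p => hb p.1 p.2))

lemma meas_int {α : Type*} [MeasurableSpace α] {F : α × ℝ → ℝ} (hm : Measurable F) :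
    Measurable (fun x => ∫ y, F (x, y) ∂bmu) :=
  hm.stronglyMeasurable.integral_prod_right'.measurable

lemma int_le_const {f : ℝ → ℝ} {C : ℝ} (hf : Integrable f bmu) (h1 : ∀ x, f x ≤ C) :
    (∫ x, f x ∂bmu) ≤ C := by
  calc (∫ x, f x ∂bmu) ≤ ∫ _x, C ∂bmu := integral_mono hf (integrable_const C) h1
    _ = C := by simp

lemma const_le_int {f : ℝ → ℝ} {C : ℝ} (hf : Integrable f bmu) (h1 : ∀ x, C ≤ f x) :
    C ≤ ∫ x, f x ∂bmu := by
  calc C = ∫ _x, C ∂bmu := by simp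
    _ ≤ ∫ x, f x ∂bmu := integral_mono (integrable_const C) hf h1

/-- Jensen via the tangent-line trick. -/
lemma my_jensen (k : ℕ) {f : ℝ → ℝ} (hm : Measurable f) (h0 : ∀ x, 0 ≤ f x) (h1 : ∀ x, f x ≤ 1)
    (tangent : ∀ a m : ℝ, 0 ≤ a → a ≤ 1 → 0 ≤ m → m ≤ 1 →
      m ^ k + k * m ^ (k - 1) * (a - m) ≤ a ^ k) :
    (∫ x, f x ∂bmu) ^ k ≤ ∫ x, f x ^ k ∂bmu := by
  set m := ∫ x, f x ∂bmu with hmdef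
  have hif : Integrable f bmu := intb01 hm h0 h1
  have hm0 : 0 ≤ m := integral_nonneg h0
  have hm1 : m ≤ 1 := int_le_const hif h1
  have hifk : Integrable (fun x => f x ^ k) bmu :=
    intb01 (hm.pow_const k) (fun x => pow_nonneg (h0 x) k) (fun x => pow_le_one₀ (h0 x) (h1 x))
  have comp : ∫ x, (((k : ℝ) * m ^ (k - 1)) * f x + (m ^ k - (k : ℝ) * m ^ (k - 1) * m)) ∂bmu
      = m ^ k := by
    rw [integral_add (hif.const_mul _) (integrable_const _), integral_const_mul, integral_const]
    simp [← hmdef]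
  have key : ∫ x, (((k : ℝ) * m ^ (k - 1)) * f x + (m ^ k - (k : ℝ) * m ^ (k - 1) * m)) ∂bmu
      ≤ ∫ x, f x ^ k ∂bmu := by
    refine integral_mono ((hif.const_mul _).add (integrable_const _)) hifk (fun x => ?_)
    have := tangent (f x) m (h0 x) (h1 x) hm0 hm1
    nlinarith [this]
  linarith [key, comp.symm.le]

/-- two-point Jensen via the tangent line -/
lemma convex_pt (k : ℕ)
    (tangent : ∀ a m : ℝ, 0 ≤ a → a ≤ 1 → 0 ≤ m → m ≤ 1 →
      m ^ k + k * m ^ (k - 1) * (a - m) ≤ a ^ k)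
    (p a b : ℝ) (hp0 : 0 ≤ p) (hp1 : p ≤ 1) (ha0 : 0 ≤ a) (ha1 : a ≤ 1)
    (hb0 : 0 ≤ b) (hb1 : b ≤ 1) :
    (p * a + (1 - p) * b) ^ k ≤ p * a ^ k + (1 - p) * b ^ k := by
  set m := p * a + (1 - p) * b with hm
  have hm0 : 0 ≤ m := by nlinarith
  have hm1 : m ≤ 1 := by nlinarith
  have h1 := tangent a m ha0 ha1 hm0 hm1
  have h2 := tangent b m hb0 hb1 hm0 hm1
  have h3 : (k : ℝ) * m ^ (k - 1) * (p * a + (1 - p) * b - m) = 0 := by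
    rw [← hm]; ring
  nlinarith [mul_le_mul_of_nonneg_left h1 hp0,
    mul_le_mul_of_nonneg_left h2 (by linarith : (0:ℝ) ≤ 1 - p), h3]

lemma master (k : ℕ) (c0 C1 C2 ε : ℝ) (hc0 : 0 ≤ c0) (hε : 0 < ε)
    (W : ℝ → ℝ → ℝ) (hW : IsGraphon W)
    (tangent : ∀ a m : ℝ, 0 ≤ a → a ≤ 1 → 0 ≤ m → m ≤ 1 →
      m ^ k + k * m ^ (k - 1) * (a - m) ≤ a ^ k)
    (mSpt : ∀ d : ℝ, 0 ≤ d → d ≤ 1 → d ^ k + (1 - d) ^ k ≤ C1 + C2 * (d - 1/2) ^ 2)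
    (mSlow : ∀ d : ℝ, 0 ≤ d → d ≤ 1 → ε ≤ d ^ k + (1 - d) ^ k)
    (final : ∀ t : ℝ, 0 ≤ t → t ≤ 1/4 → c0 * (C1 + C2 * t) ≤ (1/4 + 3 * t) ^ k) :
    c0 * mS k W ≤ mT k W ∧ 0 < mS k W := by
  obtain ⟨hWm, hWs, hWb⟩ := hW
  have hW0 : ∀ x y, 0 ≤ W x y := fun x y => (hWb x y).1
  have hW1 : ∀ x y, W x y ≤ 1 := fun x y => (hWb x y).2
  have secL : ∀ x, Measurable (fun y => W x y) := fun x => hWm.comp measurable_prodMk_left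
  have isecL : ∀ x, Integrable (fun y => W x y) bmu :=
    fun x => intb01 (secL x) (hW0 x) (hW1 x)
  -- the degree function
  set d : ℝ → ℝ := fun x => ∫ y, W x y ∂bmu with hd
  have dmeas : Measurable d := meas_int hWm
  have d0 : ∀ x, 0 ≤ d x := fun x => integral_nonneg (fun y => hW0 x y)
  have d1 : ∀ x, d x ≤ 1 := fun x => int_le_const (isecL x) (hW1 x)
  have idmeas : Integrable d bmu := intb01 dmeas d0 d1
  have dsym : ∀ z, (∫ x, W x z ∂bmu) = d z := by
    intro z
    have h : (fun x => W x z) = fun x => W z x := funext fun x => hWs x z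
    rw [h]
  -- the codegree functions
  set c : ℝ × ℝ → ℝ := fun p => ∫ z, W p.1 z * W p.2 z ∂bmu with hc
  have cmeas : Measurable c := by
    apply meas_int (F := fun q : (ℝ × ℝ) × ℝ => W q.1.1 q.2 * W q.1.2 q.2)
    exact (hWm.comp ((measurable_fst.fst).prodMk measurable_snd)).mul
      (hWm.comp ((measurable_fst.snd).prodMk measurable_snd))
  have icsec : ∀ p : ℝ × ℝ, Integrable (fun z => W p.1 z * W p.2 z) bmu := fun p =>
    intb01 ((secL p.1).mul (secL p.2)) (fun z => mul_nonneg (hW0 _ _) (hW0 _ _))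
      (fun z => mul_le_one₀ (hW1 _ _) (hW0 _ _) (hW1 _ _))
  have c0' : ∀ p, 0 ≤ c p := fun p => integral_nonneg (fun z => mul_nonneg (hW0 _ _) (hW0 _ _))
  have c1' : ∀ p, c p ≤ 1 := fun p =>
    int_le_const (icsec p) (fun z => mul_le_one₀ (hW1 _ _) (hW0 _ _) (hW1 _ _))
  set c' : ℝ × ℝ → ℝ := fun p => ∫ z, (1 - W p.1 z) * (1 - W p.2 z) ∂bmu with hc'
  have c'meas : Measurable c' := by
    apply meas_int (F := fun q : (ℝ × ℝ) × ℝ => (1 - W q.1.1 q.2) * (1 - W q.1.2 q.2))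
    exact ((measurable_const.sub (hWm.comp ((measurable_fst.fst).prodMk measurable_snd))).mul
      (measurable_const.sub (hWm.comp ((measurable_fst.snd).prodMk measurable_snd))))
  have c'0 : ∀ p, 0 ≤ c' p := fun p =>
    integral_nonneg (fun z => mul_nonneg (by linarith [hW1 p.1 z]) (by linarith [hW1 p.2 z]))
  have ic'sec : ∀ p : ℝ × ℝ, Integrable (fun z => (1 - W p.1 z) * (1 - W p.2 z)) bmu := fun p =>
    intb01 ((measurable_const.sub (secL p.1)).mul (measurable_const.sub (secL p.2)))
      (fun z => mul_nonneg (by linarith [hW1 p.1 z]) (by linarith [hW1 p.2 z]))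
      (fun z => mul_le_one₀ (by linarith [hW0 p.1 z]) (by linarith [hW1 p.2 z])
        (by linarith [hW0 p.2 z]))
  have c'1 : ∀ p, c' p ≤ 1 := fun p =>
    int_le_const (ic'sec p) (fun z => mul_le_one₀ (by linarith [hW0 p.1 z])
      (by linarith [hW1 p.2 z]) (by linarith [hW0 p.2 z]))
  -- identity c' = 1 - d x - d y + c
  have c'id : ∀ x y : ℝ, c' (x, y) = 1 - d x - d y + c (x, y) := by
    intro x y
    have i1 : Integrable (fun z => (1:ℝ) - W x z) bmu := (integrable_const 1).sub (isecL x)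
    have i2 : Integrable (fun z => (1:ℝ) - W x z - W y z) bmu := i1.sub (isecL y)
    have e1 : c' (x, y) = ∫ z, ((1 - W x z - W y z) + W x z * W y z) ∂bmu := by
      apply integral_congr_ae
      exact Filter.Eventually.of_forall (fun z => by show (1 - W x z) * (1 - W y z) = _; ring)
    rw [e1, integral_add i2 (icsec (x, y)), integral_sub i1 (isecL y),
      integral_sub (integrable_const 1) (isecL x), integral_const]
    have : c (x, y) = ∫ z, W x z * W y z ∂bmu := rfl
    rw [this]
    simp [← hd]
    try ring
  -- the combined kernel g
  set g : ℝ × ℝ → ℝ := fun p => W p.1 p.2 * c p + (1 - W p.1 p.2) * c' p with hg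
  have gmeas : Measurable g := by
    have hWm' : Measurable (fun p : ℝ × ℝ => W p.1 p.2) := hWm
    exact (hWm'.mul cmeas).add ((measurable_const.sub hWm').mul c'meas)
  have g0 : ∀ p, 0 ≤ g p := fun p => by
    have h1 := hW0 p.1 p.2; have h2 := hW1 p.1 p.2
    have h3 := c0' p; have h4 := c'0 p
    show 0 ≤ W p.1 p.2 * c p + (1 - W p.1 p.2) * c' p
    nlinarith
  have g1 : ∀ p, g p ≤ 1 := fun p => by
    have h1 := hW0 p.1 p.2; have h2 := hW1 p.1 p.2
    have h3 := c1' p; have h4 := c'1 p; have h5 := c0' p; have h6 := c'0 p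
    show W p.1 p.2 * c p + (1 - W p.1 p.2) * c' p ≤ 1
    nlinarith
  set G : ℝ → ℝ := fun x => ∫ y, g (x, y) ∂bmu with hG
  have Gmeas : Measurable G := meas_int gmeas
  have gsec : ∀ x, Measurable (fun y => g (x, y)) := fun x => gmeas.comp measurable_prodMk_left
  have igsec : ∀ x, Integrable (fun y => g (x, y)) bmu :=
    fun x => intb01 (gsec x) (fun y => g0 _) (fun y => g1 _)
  have G0 : ∀ x, 0 ≤ G x := fun x => integral_nonneg (fun y => g0 _)
  have G1 : ∀ x, G x ≤ 1 := fun x => int_le_const (igsec x) (fun y => g1 _)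
  set M : ℝ := ∫ x, G x ∂bmu with hM
  set t : ℝ := ∫ x, (d x - 1/2) ^ 2 ∂bmu with ht
  have t0 : 0 ≤ t := integral_nonneg (fun x => sq_nonneg _)
  have it2 : Integrable (fun x => (d x - 1/2) ^ 2) bmu :=
    intb ((dmeas.sub measurable_const).pow_const 2)
      (C := 1/4) (fun x => by rw [abs_of_nonneg (sq_nonneg _)]; nlinarith [d0 x, d1 x])
  have t14 : t ≤ 1/4 := int_le_const it2 (fun x => by nlinarith [d0 x, d1 x])
  -- auxiliary integrals
  set D : ℝ := ∫ x, d x ∂bmu with hD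
  set S2 : ℝ := ∫ x, (d x) ^ 2 ∂bmu with hS2
  have iS2 : Integrable (fun x => (d x) ^ 2) bmu :=
    intb01 (dmeas.pow_const 2) (fun x => sq_nonneg _) (fun x => pow_le_one₀ (d0 x) (d1 x))
  -- the weighted degree e
  have ie : ∀ x, Integrable (fun y => W x y * d y) bmu := fun x =>
    intb01 ((secL x).mul dmeas) (fun y => mul_nonneg (hW0 _ _) (d0 y))
      (fun y => mul_le_one₀ (hW1 _ _) (d0 y) (d1 y))
  set e : ℝ → ℝ := fun x => ∫ y, W x y * d y ∂bmu with he
  have emeas : Measurable e :=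
    meas_int (F := fun q : ℝ × ℝ => W q.1 q.2 * d q.2) (hWm.mul (dmeas.comp measurable_snd))
  have eb0 : ∀ x, 0 ≤ e x := fun x => integral_nonneg (fun y => mul_nonneg (hW0 _ _) (d0 y))
  have eb1 : ∀ x, e x ≤ 1 := fun x =>
    int_le_const (ie x) (fun y => mul_le_one₀ (hW1 _ _) (d0 y) (d1 y))
  have iee : Integrable e bmu := intb01 emeas eb0 eb1
  have habs : ∀ x y : ℝ, |W x y * d y| ≤ 1 := fun x y => abs_le.2
    ⟨by nlinarith [mul_nonneg (hW0 x y) (d0 y)], mul_le_one₀ (hW1 x y) (d0 y) (d1 y)⟩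
  have hE : (∫ x, e x ∂bmu) = S2 := by
    rw [he]
    rw [my_swap (fun x y => W x y * d y) (C := 1) (hWm.mul (dmeas.comp measurable_snd)) habs]
    rw [hS2]
    apply integral_congr_ae
    refine Filter.Eventually.of_forall (fun y => ?_)
    show (∫ x, W x y * d y ∂bmu) = d y ^ 2
    rw [integral_mul_const, dsym y]
    ring
  -- ∫ y, c (x, y) = ∫ z, W x z * d z
  have hcx : ∀ x, (∫ y, c (x, y) ∂bmu) = ∫ z, W x z * d z ∂bmu := by
    intro x
    have habs2 : ∀ y z : ℝ, |W x z * W y z| ≤ 1 := fun y z => abs_le.2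
      ⟨by nlinarith [mul_nonneg (hW0 x z) (hW0 y z)], mul_le_one₀ (hW1 x z) (hW0 y z) (hW1 y z)⟩
    have swp : (∫ y, (∫ z, W x z * W y z ∂bmu) ∂bmu) = ∫ z, (∫ y, W x z * W y z ∂bmu) ∂bmu :=
      my_swap (fun y z => W x z * W y z) (C := 1)
        (((secL x).comp measurable_snd).mul hWm) habs2
    have e2 : (∫ y, c (x, y) ∂bmu) = ∫ y, (∫ z, W x z * W y z ∂bmu) ∂bmu := rfl
    rw [e2, swp]
    apply integral_congr_ae
    refine Filter.Eventually.of_forall (fun z => ?_)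
    show (∫ y, W x z * W y z ∂bmu) = W x z * d z
    rw [integral_const_mul, dsym z]
  have hA : (∫ x, (∫ y, c (x, y) ∂bmu) ∂bmu) = S2 := by
    have e2 : (∫ x, (∫ y, c (x, y) ∂bmu) ∂bmu) = ∫ x, (∫ z, W x z * d z ∂bmu) ∂bmu := by
      apply integral_congr_ae
      exact Filter.Eventually.of_forall (fun x => hcx x)
    have habs3 : ∀ x z : ℝ, |W x z * d z| ≤ 1 := fun x z => habs x z
    rw [e2, my_swap (fun x z => W x z * d z) (C := 1)
      (hWm.mul (dmeas.comp measurable_snd)) habs3, hS2]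
    apply integral_congr_ae
    refine Filter.Eventually.of_forall (fun z => ?_)
    show (∫ x, W x z * d z ∂bmu) = d z ^ 2
    rw [integral_mul_const, dsym z]
    ring
  -- inner expansion of the rest term
  have hrest : ∀ x, (∫ y, ((1 - W x y) * (1 - d x - d y)) ∂bmu)
      = 1 - D - 2 * d x + d x ^ 2 + e x := by
    intro x
    have i1 : Integrable (fun y => ((1:ℝ) - d x) - d y) bmu :=
      (integrable_const _).sub idmeas
    have i2 : Integrable (fun y => (((1:ℝ) - d x) - d y) - W x y) bmu := i1.sub (isecL x)
    have i3 : Integrable (fun y => W x y * d x) bmu := (isecL x).mul_const _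
    have i4 : Integrable (fun y => (((1:ℝ) - d x) - d y) - W x y + W x y * d x) bmu := i2.add i3
    have e3 : (∫ y, ((1 - W x y) * (1 - d x - d y)) ∂bmu)
        = ∫ y, (((((1 - d x) - d y) - W x y + W x y * d x) + W x y * d y)) ∂bmu := by
      apply integral_congr_ae
      exact Filter.Eventually.of_forall (fun y => by show (1 - W x y) * (1 - d x - d y) = _; ring)
    rw [e3, integral_add i4 (ie x), integral_add i2 i3, integral_sub i1 (isecL x),
      integral_sub (integrable_const _) idmeas, integral_const, integral_mul_const]
    have e4 : (∫ y, W x y ∂bmu) = d x := rfl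
    have e5 : (∫ y, W x y * d y ∂bmu) = e x := rfl
    rw [e4, e5]
    simp [← hD]
    ring
  -- G splits
  have icx2 : ∀ x, Integrable (fun y => c (x, y)) bmu := fun x =>
    intb01 (cmeas.comp measurable_prodMk_left) (fun y => c0' _) (fun y => c1' _)
  have hGx : ∀ x, G x = (∫ y, c (x, y) ∂bmu) + (1 - D - 2 * d x + d x ^ 2 + e x) := by
    intro x
    have irx : Integrable (fun y => (1 - W x y) * (1 - d x - d y)) bmu := by
      refine intb (C := 2) ((measurable_const.sub (secL x)).mul
        ((measurable_const.sub dmeas))) (fun y => ?_)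
      rw [abs_mul]
      have h1 : |1 - W x y| ≤ 1 := abs_le.2 ⟨by linarith [hW1 x y], by linarith [hW0 x y]⟩
      have h2 : |1 - d x - d y| ≤ 2 := abs_le.2 ⟨by linarith [d1 x, d1 y], by linarith [d0 x, d0 y]⟩
      nlinarith [abs_nonneg (1 - W x y), abs_nonneg (1 - d x - d y)]
    have e6 : G x = ∫ y, (c (x, y) + (1 - W x y) * (1 - d x - d y)) ∂bmu := by
      apply integral_congr_ae
      refine Filter.Eventually.of_forall (fun y => ?_)
      show g (x, y) = _
      have e7 : g (x, y) = W x y * c (x, y) + (1 - W x y) * c' (x, y) := rfl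
      rw [e7, c'id x y]
      ring
    rw [e6, integral_add (icx2 x) irx, hrest x]
  -- value of M
  have hMval : M = 1 - 3 * D + 3 * S2 := by
    have i5 : Integrable (fun x => (1:ℝ) - D - 2 * d x) bmu :=
      ((integrable_const _).sub (idmeas.const_mul 2))
    have i6 : Integrable (fun x => (1:ℝ) - D - 2 * d x + d x ^ 2) bmu := i5.add iS2
    have i7 : Integrable (fun x => (1:ℝ) - D - 2 * d x + d x ^ 2 + e x) bmu := i6.add iee
    have iIc : Integrable (fun x => ∫ y, c (x, y) ∂bmu) bmu :=
      intb01 (meas_int cmeas) (fun x => integral_nonneg (fun y => c0' _))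
        (fun x => int_le_const (icx2 x) (fun y => c1' _))
    have e8 : M = ∫ x, ((∫ y, c (x, y) ∂bmu) + (1 - D - 2 * d x + d x ^ 2 + e x)) ∂bmu := by
      apply integral_congr_ae
      exact Filter.Eventually.of_forall (fun x => hGx x)
    rw [e8, integral_add iIc i7, hA, integral_add i6 iee, integral_add i5 iS2, hE,
      integral_sub (integrable_const _) (idmeas.const_mul 2), integral_const,
      integral_const_mul]
    simp [← hD, ← hS2]
    ring
  have htval : t = S2 - D + 1/4 := by
    have i8 : Integrable (fun x => d x ^ 2 - d x) bmu := iS2.sub idmeas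
    have e9 : t = ∫ x, (d x ^ 2 - d x + 1/4) ∂bmu := by
      apply integral_congr_ae
      exact Filter.Eventually.of_forall (fun x => by show (d x - 1/2)^2 = _; ring)
    rw [e9, integral_add i8 (integrable_const _),
      integral_sub iS2 idmeas, integral_const]
    simp [← hD, ← hS2]
  have hMt : M = 1/4 + 3 * t := by rw [hMval, htval]; ring
  -- Jensen chain
  have pt9 : ∀ x y : ℝ, (g (x, y)) ^ k
      ≤ W x y * (c (x, y)) ^ k + (1 - W x y) * (c' (x, y)) ^ k := by
    intro x y
    have := convex_pt k tangent (W x y) (c (x, y)) (c' (x, y)) (hW0 x y) (hW1 x y)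
      (c0' _) (c1' _) (c'0 _) (c'1 _)
    exact this
  have J2 : ∀ x, (G x) ^ k ≤ ∫ y, (g (x, y)) ^ k ∂bmu := fun x =>
    my_jensen k (gsec x) (fun y => g0 _) (fun y => g1 _) tangent
  have ckmeas : Measurable (fun p : ℝ × ℝ => W p.1 p.2 * (c p) ^ k + (1 - W p.1 p.2) * (c' p) ^ k) := by
    have hWm' : Measurable (fun p : ℝ × ℝ => W p.1 p.2) := hWm
    exact (hWm'.mul (cmeas.pow_const k)).add ((measurable_const.sub hWm').mul (c'meas.pow_const k))
  have bigb0 : ∀ p : ℝ × ℝ, 0 ≤ W p.1 p.2 * (c p) ^ k + (1 - W p.1 p.2) * (c' p) ^ k := by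
    intro p
    have h1 := hW0 p.1 p.2; have h2 := hW1 p.1 p.2
    nlinarith [pow_nonneg (c0' p) k, pow_nonneg (c'0 p) k]
  have bigb1 : ∀ p : ℝ × ℝ, W p.1 p.2 * (c p) ^ k + (1 - W p.1 p.2) * (c' p) ^ k ≤ 1 := by
    intro p
    have h1 := hW0 p.1 p.2; have h2 := hW1 p.1 p.2
    nlinarith [pow_le_one₀ (n := k) (c0' p) (c1' p), pow_le_one₀ (n := k) (c'0 p) (c'1 p),
      pow_nonneg (c0' p) k, pow_nonneg (c'0 p) k]
  have ibk : ∀ x, Integrable (fun y => W x y * (c (x, y)) ^ k + (1 - W x y) * (c' (x, y)) ^ k) bmu :=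
    fun x => intb01 (ckmeas.comp measurable_prodMk_left) (fun y => bigb0 (x, y)) (fun y => bigb1 (x, y))
  have J3 : ∀ x, (∫ y, (g (x, y)) ^ k ∂bmu)
      ≤ ∫ y, (W x y * (c (x, y)) ^ k + (1 - W x y) * (c' (x, y)) ^ k) ∂bmu := fun x =>
    integral_mono (intb01 ((gsec x).pow_const k) (fun y => pow_nonneg (g0 _) k)
      (fun y => pow_le_one₀ (g0 _) (g1 _))) (ibk x) (fun y => pt9 x y)
  have iA : Integrable (fun x => ∫ y, (W x y * (c (x, y)) ^ k + (1 - W x y) * (c' (x, y)) ^ k) ∂bmu) bmu :=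
    intb01 (meas_int ckmeas) (fun x => integral_nonneg (fun y => bigb0 (x, y)))
      (fun x => int_le_const (ibk x) (fun y => bigb1 (x, y)))
  have hmTform : mT k W
      = ∫ x, (∫ y, (W x y * (c (x, y)) ^ k + (1 - W x y) * (c' (x, y)) ^ k) ∂bmu) ∂bmu := by
    have iA1 : ∀ x, Integrable (fun y => W x y * (c (x, y)) ^ k) bmu := fun x =>
      intb01 ((secL x).mul ((cmeas.comp measurable_prodMk_left).pow_const k))
        (fun y => mul_nonneg (hW0 _ _) (pow_nonneg (c0' _) k))
        (fun y => mul_le_one₀ (hW1 _ _) (pow_nonneg (c0' _) k) (pow_le_one₀ (c0' _) (c1' _)))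
    have iA2 : ∀ x, Integrable (fun y => (1 - W x y) * (c' (x, y)) ^ k) bmu := fun x =>
      intb01 ((measurable_const.sub (secL x)).mul ((c'meas.comp measurable_prodMk_left).pow_const k))
        (fun y => mul_nonneg (by linarith [hW1 x y]) (pow_nonneg (c'0 _) k))
        (fun y => mul_le_one₀ (by linarith [hW0 x y]) (pow_nonneg (c'0 _) k)
          (pow_le_one₀ (c'0 _) (c'1 _)))
    have iB1 : Integrable (fun x => ∫ y, W x y * (c (x, y)) ^ k ∂bmu) bmu := by
      have hWm' : Measurable (fun p : ℝ × ℝ => W p.1 p.2) := hWm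
      exact intb01 (meas_int (hWm'.mul (cmeas.pow_const k)))
        (fun x => integral_nonneg (fun y => mul_nonneg (hW0 _ _) (pow_nonneg (c0' _) k)))
        (fun x => int_le_const (iA1 x) (fun y => mul_le_one₀ (hW1 _ _) (pow_nonneg (c0' _) k)
          (pow_le_one₀ (c0' _) (c1' _))))
    have iB2 : Integrable (fun x => ∫ y, (1 - W x y) * (c' (x, y)) ^ k ∂bmu) bmu := by
      have hWm' : Measurable (fun p : ℝ × ℝ => W p.1 p.2) := hWm
      exact intb01 (meas_int ((measurable_const.sub hWm').mul (c'meas.pow_const k)))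
        (fun x => integral_nonneg (fun y => mul_nonneg (by linarith [hW1 x y]) (pow_nonneg (c'0 _) k)))
        (fun x => int_le_const (iA2 x) (fun y => mul_le_one₀ (by linarith [hW0 x y])
          (pow_nonneg (c'0 _) k) (pow_le_one₀ (c'0 _) (c'1 _))))
    have h1 : tT k W = ∫ x, (∫ y, W x y * (c (x, y)) ^ k ∂bmu) ∂bmu := rfl
    have h2 : tT k (cW W) = ∫ x, (∫ y, (1 - W x y) * (c' (x, y)) ^ k ∂bmu) ∂bmu := rfl
    show tT k W + tT k (cW W) = _
    rw [h1, h2, ← integral_add iB1 iB2]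
    apply integral_congr_ae
    refine Filter.Eventually.of_forall (fun x => ?_)
    show (∫ y, W x y * (c (x, y)) ^ k ∂bmu) + (∫ y, (1 - W x y) * (c' (x, y)) ^ k ∂bmu) = _
    rw [← integral_add (iA1 x) (iA2 x)]
  have JT : M ^ k ≤ mT k W := by
    have j4 : M ^ k ≤ ∫ x, (G x) ^ k ∂bmu := my_jensen k Gmeas G0 G1 tangent
    have j5 : (∫ x, (G x) ^ k ∂bmu)
        ≤ ∫ x, (∫ y, (W x y * (c (x, y)) ^ k + (1 - W x y) * (c' (x, y)) ^ k) ∂bmu) ∂bmu :=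
      integral_mono (intb01 (Gmeas.pow_const k) (fun x => pow_nonneg (G0 x) k)
        (fun x => pow_le_one₀ (G0 x) (G1 x))) iA
        (fun x => le_trans (J2 x) (J3 x))
    rw [hmTform]
    linarith
  -- the star side
  have isum : Integrable (fun x => (d x) ^ k + (1 - d x) ^ k) bmu := by
    refine intb (C := 2) ((dmeas.pow_const k).add
      ((measurable_const.sub dmeas).pow_const k)) (fun x => ?_)
    have h1 : 0 ≤ (d x) ^ k := pow_nonneg (d0 x) k
    have h2 : (d x) ^ k ≤ 1 := pow_le_one₀ (d0 x) (d1 x)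
    have h3 : 0 ≤ (1 - d x) ^ k := pow_nonneg (by linarith [d1 x]) k
    have h4 : (1 - d x) ^ k ≤ 1 := pow_le_one₀ (by linarith [d1 x]) (by linarith [d0 x])
    rw [abs_le]
    constructor <;> linarith
  have hmSform : mS k W = ∫ x, ((d x) ^ k + (1 - d x) ^ k) ∂bmu := by
    have h1 : tS k W = ∫ x, (d x) ^ k ∂bmu := rfl
    have h2 : tS k (cW W) = ∫ x, (∫ y, (1 - W x y) ∂bmu) ^ k ∂bmu := rfl
    have h3 : tS k (cW W) = ∫ x, (1 - d x) ^ k ∂bmu := by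
      rw [h2]
      apply integral_congr_ae
      refine Filter.Eventually.of_forall (fun x => ?_)
      show (∫ y, (1 - W x y) ∂bmu) ^ k = (1 - d x) ^ k
      rw [integral_sub (integrable_const 1) (isecL x), integral_const]
      simp [← hd]; rfl
    have i1 : Integrable (fun x => (d x) ^ k) bmu :=
      intb01 (dmeas.pow_const k) (fun x => pow_nonneg (d0 x) k)
        (fun x => pow_le_one₀ (d0 x) (d1 x))
    have i2 : Integrable (fun x => (1 - d x) ^ k) bmu :=
      intb01 ((measurable_const.sub dmeas).pow_const k)
        (fun x => pow_nonneg (by linarith [d1 x]) k)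
        (fun x => pow_le_one₀ (by linarith [d1 x]) (by linarith [d0 x]))
    show tS k W + tS k (cW W) = _
    rw [h1, h3, ← integral_add i1 i2]
  have hmS_ub : mS k W ≤ C1 + C2 * t := by
    rw [hmSform]
    have step : (∫ x, ((d x) ^ k + (1 - d x) ^ k) ∂bmu)
        ≤ ∫ x, (C1 + C2 * (d x - 1/2) ^ 2) ∂bmu :=
      integral_mono isum ((integrable_const _).add (it2.const_mul _))
        (fun x => mSpt (d x) (d0 x) (d1 x))
    have comp2 : (∫ x, (C1 + C2 * (d x - 1/2) ^ 2) ∂bmu) = C1 + C2 * t := by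
      rw [integral_add (integrable_const _) (it2.const_mul _), integral_const,
        integral_const_mul, ← ht]
      simp
    linarith
  have hmS_lb : ε ≤ mS k W := by
    rw [hmSform]
    exact const_le_int isum (fun x => mSlow (d x) (d0 x) (d1 x))
  refine ⟨?_, lt_of_lt_of_le hε hmS_lb⟩
  calc c0 * mS k W ≤ c0 * (C1 + C2 * t) := mul_le_mul_of_nonneg_left hmS_ub hc0
    _ ≤ (1/4 + 3 * t) ^ k := final t t0 t14
    _ = M ^ k := by rw [hMt]
    _ ≤ mT k W := JT

end BookAux


/-- Key lemma: for `k ∈ {1,…,5}` and every graphon `W`,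
`m(T_k,W)/m(S_k,W) ≥ 2^(-(k+1))`, i.e. `m(T_k,W) ≥ 2^(-(k+1))·m(S_k,W)`. -/
theorem stmt10 (k : ℕ) (hk1 : 1 ≤ k) (hk5 : k ≤ 5) (W : ℝ → ℝ → ℝ) (hW : IsGraphon W) :
    mT k W / mS k W ≥ (2:ℝ) ^ (-((k:ℤ) + 1)) ∧
    mT k W ≥ (2:ℝ) ^ (-((k:ℤ) + 1)) * mS k W := by
  have key : (2:ℝ) ^ (-((k:ℤ) + 1)) * mS k W ≤ mT k W ∧ 0 < mS k W := by
    interval_cases k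
    · -- k = 1
      refine BookAux.master 1 _ 1 0 (1/2) (by positivity) (by norm_num) W hW ?_ ?_ ?_ ?_
      · intro a m ha0 ha1 hm0 hm1; push_cast; norm_num
      · intro d hd0 hd1; norm_num
      · intro d hd0 hd1; nlinarith []
      · intro t ht0 ht1; norm_num; nlinarith []
    · -- k = 2
      refine BookAux.master 2 _ (1/2) 2 (1/4) (by positivity) (by norm_num) W hW ?_ ?_ ?_ ?_
      · intro a m ha0 ha1 hm0 hm1; push_cast; norm_num
        nlinarith [sq_nonneg (a - m)]
      · intro d hd0 hd1; nlinarith []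
      · intro d hd0 hd1; nlinarith [sq_nonneg (d - 1/2)]
      · intro t ht0 ht1; norm_num; nlinarith [sq_nonneg t]
    · -- k = 3
      refine BookAux.master 3 _ (1/4) 3 (1/8) (by positivity) (by norm_num) W hW ?_ ?_ ?_ ?_
      · intro a m ha0 ha1 hm0 hm1; push_cast; norm_num
        nlinarith [mul_nonneg (sq_nonneg (a - m)) (by linarith : (0:ℝ) ≤ a + 2*m)]
      · intro d hd0 hd1; nlinarith []
      · intro d hd0 hd1; nlinarith [sq_nonneg (d - 1/2)]
      · intro t ht0 ht1; norm_num
        nlinarith [sq_nonneg t, mul_nonneg (mul_nonneg ht0 ht0) ht0]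
    · -- k = 4
      refine BookAux.master 4 _ (1/8) (7/2) (1/16) (by positivity) (by norm_num) W hW ?_ ?_ ?_ ?_
      · intro a m ha0 ha1 hm0 hm1; push_cast; norm_num
        have hP : (0:ℝ) ≤ a^2 + 2*a*m + 3*m^2 := by nlinarith [sq_nonneg (a + m), sq_nonneg m]
        nlinarith [mul_nonneg (sq_nonneg (a - m)) hP]
      · intro d hd0 hd1
        nlinarith [mul_nonneg (mul_nonneg (sq_nonneg (d - 1/2)) hd0) (by linarith : (0:ℝ) ≤ 1 - d)]
      · intro d hd0 hd1; nlinarith [sq_nonneg (d - 1/2), sq_nonneg ((d - 1/2)^2)]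
      · intro t ht0 ht1; norm_num
        nlinarith [sq_nonneg t, mul_nonneg (mul_nonneg ht0 ht0) ht0,
          mul_nonneg (mul_nonneg (mul_nonneg ht0 ht0) ht0) ht0]
    · -- k = 5
      refine BookAux.master 5 _ (1/16) (15/4) (1/32) (by positivity) (by norm_num) W hW ?_ ?_ ?_ ?_
      · intro a m ha0 ha1 hm0 hm1; push_cast; norm_num
        have hP : (0:ℝ) ≤ a^3 + 2*a^2*m + 3*a*m^2 + 4*m^3 := by
          nlinarith [pow_nonneg ha0 3, pow_nonneg hm0 3,
            mul_nonneg (mul_nonneg ha0 ha0) hm0, mul_nonneg (mul_nonneg hm0 hm0) ha0]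
        nlinarith [mul_nonneg (sq_nonneg (a - m)) hP]
      · intro d hd0 hd1
        nlinarith [mul_nonneg (mul_nonneg (sq_nonneg (d - 1/2)) hd0) (by linarith : (0:ℝ) ≤ 1 - d)]
      · intro d hd0 hd1; nlinarith [sq_nonneg (d - 1/2), sq_nonneg ((d - 1/2)^2)]
      · intro t ht0 ht1; norm_num
        nlinarith [sq_nonneg t, mul_nonneg (mul_nonneg ht0 ht0) ht0,
          mul_nonneg (mul_nonneg (mul_nonneg ht0 ht0) ht0) ht0,
          mul_nonneg (mul_nonneg (mul_nonneg (mul_nonneg ht0 ht0) ht0) ht0) ht0]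
  refine ⟨?_, key.1⟩
  rw [ge_iff_le, le_div_iff₀ key.2]
  calc (2:ℝ) ^ (-((k:ℤ) + 1)) * mS k W ≤ mT k W := key.1
end
end

section
/- Let ε ∈ [0,1) and let W_ε be the graphon defined by partitioning [0,1] into an interval A of length ε and intervals B, C, D each of length (1−ε)/3, with W_ε = 1 on ((A∪B)² ∪ (A∪C)² ∪ (A∪D)²) \ A² and W_ε = 0 elsewhere. Then for every k ≥ 1: t(S_k, W_ε) = ε(1−ε)^k + (1−ε)((1+2ε)/3)^k and t(S_k, 1−W_ε) = ε^{k+1} + (1−ε)((2−2ε)/3)^k. -/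
open MeasureTheory
noncomputable section

/-- block index of `x ∈ [0,1]`: `0` for the interval `A` of length `ε`, and `1,2,3`
for the intervals `B,C,D`, each of length `(1-ε)/3`. -/
def blk (ε x : ℝ) : ℕ :=
  if x < ε then 0
  else if x < ε + (1 - ε) / 3 then 1
  else if x < ε + 2 * (1 - ε) / 3 then 2
  else 3

/-- the graphon `W_ε`: value `1` on `((A∪B)² ∪ (A∪C)² ∪ (A∪D)²) \\ A²` and `0` elsewhere. -/
def Weps (ε : ℝ) : ℝ → ℝ → ℝ := fun x y =>
  if (blk ε x = 0 ∨ blk ε y = 0 ∨ blk ε x = blk ε y) ∧ ¬(blk ε x = 0 ∧ blk ε y = 0)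
  then 1 else 0

-- auxiliary lemmas to insert
lemma pieceIntegral {s : Set ℝ} (hs : MeasurableSet s) (hvol : MeasureTheory.volume s ≠ ⊤)
    (f : ℝ → ℝ) (c : ℝ) (h : ∀ y ∈ s, f y = c) :
    MeasureTheory.IntegrableOn f s ∧
      ∫ y in s, f y = c * (MeasureTheory.volume s).toReal := by
  constructor
  · exact (MeasureTheory.integrableOn_const (C := c) hvol enorm_ne_top).congr_fun
      (fun y hy => (h y hy).symm) hs
  · rw [MeasureTheory.setIntegral_congr_fun hs h, MeasureTheory.setIntegral_const,
      smul_eq_mul, mul_comm, measureReal_def]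

lemma blk_integral (ε : ℝ) (hε0 : 0 ≤ ε) (hε1 : ε ≤ 1) (F : ℕ → ℝ) :
    ∫ y in Set.Icc (0:ℝ) 1, F (blk ε y)
      = ε * F 0 + (1 - ε) / 3 * (F 1 + F 2 + F 3) := by
  have hεc1 : ε ≤ ε + (1 - ε) / 3 := by linarith
  have hc1c2 : ε + (1 - ε) / 3 ≤ ε + 2 * (1 - ε) / 3 := by linarith
  have hc21 : ε + 2 * (1 - ε) / 3 ≤ 1 := by linarith
  have hb0 : ∀ y ∈ Set.Ico (0:ℝ) ε, F (blk ε y) = F 0 := by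
    intro y hy; simp [blk, hy.2]
  have hb1 : ∀ y ∈ Set.Ico ε (ε + (1 - ε) / 3), F (blk ε y) = F 1 := by
    intro y hy; simp [blk, not_lt.2 hy.1, hy.2]
  have hb2 : ∀ y ∈ Set.Ico (ε + (1 - ε) / 3) (ε + 2 * (1 - ε) / 3),
      F (blk ε y) = F 2 := by
    intro y hy
    have h1 : ¬ y < ε := by have := hy.1; intro h; linarith
    have h2 : ¬ y < ε + (1 - ε) / 3 := not_lt.2 hy.1
    simp [blk, h1, h2, hy.2]
  have hb3 : ∀ y ∈ Set.Icc (ε + 2 * (1 - ε) / 3) 1, F (blk ε y) = F 3 := by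
    intro y hy
    have h1 : ¬ y < ε := by have := hy.1; intro h; linarith
    have h2 : ¬ y < ε + (1 - ε) / 3 := by have := hy.1; intro h; linarith
    have h3 : ¬ y < ε + 2 * (1 - ε) / 3 := not_lt.2 hy.1
    simp [blk, h1, h2, h3]
  have P0 := pieceIntegral measurableSet_Ico
    (by simp [Real.volume_Ico]) _ _ hb0
  have P1 := pieceIntegral measurableSet_Ico
    (by simp [Real.volume_Ico]) _ _ hb1
  have P2 := pieceIntegral measurableSet_Ico
    (by simp [Real.volume_Ico]) _ _ hb2
  have P3 := pieceIntegral measurableSet_Icc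
    (by simp [Real.volume_Icc]) _ _ hb3
  have decomp : Set.Icc (0:ℝ) 1
      = Set.Ico 0 ε ∪ (Set.Ico ε (ε + (1 - ε) / 3) ∪
        (Set.Ico (ε + (1 - ε) / 3) (ε + 2 * (1 - ε) / 3) ∪
          Set.Icc (ε + 2 * (1 - ε) / 3) 1)) := by
    rw [Set.Ico_union_Icc_eq_Icc hc1c2 hc21,
      Set.Ico_union_Icc_eq_Icc hεc1 (hc1c2.trans hc21),
      Set.Ico_union_Icc_eq_Icc hε0 hε1]
  have d3 : Disjoint (Set.Ico (ε + (1 - ε) / 3) (ε + 2 * (1 - ε) / 3))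
      (Set.Icc (ε + 2 * (1 - ε) / 3) 1) := by
    rw [Set.disjoint_left]; rintro y ⟨_, h⟩ ⟨h', _⟩; linarith
  have d2 : Disjoint (Set.Ico ε (ε + (1 - ε) / 3))
      (Set.Ico (ε + (1 - ε) / 3) (ε + 2 * (1 - ε) / 3) ∪
        Set.Icc (ε + 2 * (1 - ε) / 3) 1) := by
    rw [Set.disjoint_left]; rintro y ⟨_, h⟩ (⟨h', _⟩ | ⟨h', _⟩) <;> linarith
  have d1 : Disjoint (Set.Ico (0:ℝ) ε)
      (Set.Ico ε (ε + (1 - ε) / 3) ∪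
        (Set.Ico (ε + (1 - ε) / 3) (ε + 2 * (1 - ε) / 3) ∪
          Set.Icc (ε + 2 * (1 - ε) / 3) 1)) := by
    rw [Set.disjoint_left]
    rintro y ⟨_, h⟩ (⟨h', _⟩ | ⟨h', _⟩ | ⟨h', _⟩) <;> linarith
  rw [decomp,
    MeasureTheory.setIntegral_union d1
      (measurableSet_Ico.union (measurableSet_Ico.union measurableSet_Icc)) P0.1
      (P1.1.union (P2.1.union P3.1)),
    MeasureTheory.setIntegral_union d2 (measurableSet_Ico.union measurableSet_Icc) P1.1
      (P2.1.union P3.1),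
    MeasureTheory.setIntegral_union d3 measurableSet_Icc P2.1 P3.1,
    P0.2, P1.2, P2.2, P3.2, Real.volume_Ico, Real.volume_Ico, Real.volume_Ico,
    Real.volume_Icc, ENNReal.toReal_ofReal (by linarith),
    ENNReal.toReal_ofReal (by linarith), ENNReal.toReal_ofReal (by linarith),
    ENNReal.toReal_ofReal (by linarith)]
  ring

/-- star densities in `W_ε`:
`t(S_k,W_ε) = ε(1-ε)^k + (1-ε)((1+2ε)/3)^k` and
`t(S_k,1-W_ε) = ε^(k+1) + (1-ε)((2-2ε)/3)^k`. -/
theorem stmt16 (ε : ℝ) (hε0 : 0 ≤ ε) (hε1 : ε < 1) (k : ℕ) (hk : 1 ≤ k) :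
    tS k (Weps ε) = ε * (1 - ε) ^ k + (1 - ε) * ((1 + 2 * ε) / 3) ^ k ∧
    tS k (cW (Weps ε)) = ε ^ (k + 1) + (1 - ε) * ((2 - 2 * ε) / 3) ^ k := by
  have hε1' : ε ≤ 1 := hε1.le
  -- inner integral for W
  have keyW : ∀ x : ℝ, (∫ y in Set.Icc (0:ℝ) 1, Weps ε x y)
      = if blk ε x = 0 then 1 - ε else (1 + 2 * ε) / 3 := by
    intro x
    have := blk_integral ε hε0 hε1' (fun j =>
      if (blk ε x = 0 ∨ j = 0 ∨ blk ε x = j) ∧ ¬(blk ε x = 0 ∧ j = 0) then (1:ℝ) else 0)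
    simp only [Weps]
    rw [this]
    have hx : blk ε x = 0 ∨ blk ε x = 1 ∨ blk ε x = 2 ∨ blk ε x = 3 := by
      unfold blk; split_ifs <;> simp
    rcases hx with h | h | h | h <;> rw [h] <;> norm_num <;> ring
  have keyC : ∀ x : ℝ, (∫ y in Set.Icc (0:ℝ) 1, cW (Weps ε) x y)
      = if blk ε x = 0 then ε else (2 - 2 * ε) / 3 := by
    intro x
    have := blk_integral ε hε0 hε1' (fun j =>
      1 - if (blk ε x = 0 ∨ j = 0 ∨ blk ε x = j) ∧ ¬(blk ε x = 0 ∧ j = 0) then (1:ℝ) else 0)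
    simp only [cW, Weps]
    rw [this]
    have hx : blk ε x = 0 ∨ blk ε x = 1 ∨ blk ε x = 2 ∨ blk ε x = 3 := by
      unfold blk; split_ifs <;> simp
    rcases hx with h | h | h | h <;> rw [h] <;> norm_num <;> ring
  constructor
  · unfold tS
    simp only [keyW]
    rw [show (fun x => (if blk ε x = 0 then 1 - ε else (1 + 2 * ε) / 3) ^ k)
        = fun x => (fun i : ℕ => (if i = 0 then 1 - ε else (1 + 2 * ε) / 3) ^ k) (blk ε x)
        from rfl]
    exact (blk_integral ε hε0 hε1'
      (fun i : ℕ => (if i = 0 then 1 - ε else (1 + 2 * ε) / 3) ^ k)).trans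
      (by norm_num; ring)
  · unfold tS
    simp only [keyC]
    rw [show (fun x => (if blk ε x = 0 then ε else (2 - 2 * ε) / 3) ^ k)
        = fun x => (fun i : ℕ => (if i = 0 then ε else (2 - 2 * ε) / 3) ^ k) (blk ε x)
        from rfl]
    exact (blk_integral ε hε0 hε1'
      (fun i : ℕ => (if i = 0 then ε else (2 - 2 * ε) / 3) ^ k)).trans
      (by norm_num; ring)
end
end

section
/- With W_ε the three-pendant-blocks graphon as above, for every k ≥ 1: t(T_k, W_ε) = 2ε(1−ε)((1−ε)/3)^k + 3((1−ε)/3)²((1+2ε)/3)^k and t(T_k, 1−W_ε) = ε^{k+2} + 6((1−ε)/3)^{k+2}. -/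
open MeasureTheory
noncomputable section

lemma intA (ε : ℝ) (hε0 : 0 ≤ ε) (hε1 : ε < 1) (g : ℕ → ℝ) :
    ∫ x in Set.Icc (0:ℝ) 1, g (blk ε x)
      = ε * g 0 + (1 - ε) / 3 * (g 1 + g 2 + g 3) := by
  have hL0 : (0:ℝ) ≤ (1 - ε) / 3 := by linarith
  set L : ℝ := (1 - ε) / 3 with hL
  -- constants on pieces
  have c0 : ∀ x ∈ Set.Ico (0:ℝ) ε, g (blk ε x) = g 0 := by
    intro x hx; simp [blk, hx.2]
  have c1 : ∀ x ∈ Set.Ico ε (ε + L), g (blk ε x) = g 1 := by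
    intro x hx
    have h0 : ¬ x < ε := not_lt.2 hx.1
    have h1 : x < ε + (1 - ε) / 3 := hx.2
    simp [blk, h0, h1]
  have c2 : ∀ x ∈ Set.Ico (ε + L) (ε + 2*L), g (blk ε x) = g 2 := by
    intro x hx
    have h0 : ¬ x < ε := not_lt.2 (by linarith [hx.1])
    have h1 : ¬ x < ε + (1 - ε) / 3 := not_lt.2 (by linarith [hx.1])
    have h2 : x < ε + 2 * (1 - ε) / 3 := by linarith [hx.2]
    simp [blk, h0, h1, h2]
  have c3 : ∀ x ∈ Set.Icc (ε + 2*L) 1, g (blk ε x) = g 3 := by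
    intro x hx
    have h0 : ¬ x < ε := not_lt.2 (by linarith [hx.1])
    have h1 : ¬ x < ε + (1 - ε) / 3 := not_lt.2 (by linarith [hx.1])
    have h2 : ¬ x < ε + 2 * (1 - ε) / 3 := not_lt.2 (by linarith [hx.1])
    simp [blk, h0, h1, h2]
  have intOn : ∀ (a b : ℝ) (c : ℕ), (∀ x ∈ Set.Ico a b, g (blk ε x) = g c) →
      IntegrableOn (fun x => g (blk ε x)) (Set.Ico a b) := by
    intro a b c hc
    exact IntegrableOn.congr_fun (integrableOn_const
      (by rw [Real.volume_Ico]; exact ENNReal.ofReal_ne_top))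
      (fun x hx => (hc x hx).symm) measurableSet_Ico
  have valOn : ∀ (a b : ℝ), a ≤ b → ∀ (c : ℕ), (∀ x ∈ Set.Ico a b, g (blk ε x) = g c) →
      ∫ x in Set.Ico a b, g (blk ε x) = (b - a) * g c := by
    intro a b hab c hc
    rw [setIntegral_congr_fun measurableSet_Ico hc, setIntegral_const,
      Real.volume_real_Ico, max_eq_left (by linarith), smul_eq_mul]
  have i3 : IntegrableOn (fun x => g (blk ε x)) (Set.Icc (ε + 2*L) 1) :=
    IntegrableOn.congr_fun (integrableOn_const
      (by rw [Real.volume_Icc]; exact ENNReal.ofReal_ne_top))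
      (fun x hx => (c3 x hx).symm) measurableSet_Icc
  have v3 : ∫ x in Set.Icc (ε + 2*L) 1, g (blk ε x) = L * g 3 := by
    rw [setIntegral_congr_fun measurableSet_Icc c3, setIntegral_const,
      Real.volume_real_Icc, max_eq_left (by rw [hL]; linarith), smul_eq_mul]
    rw [hL]; ring_nf
  have dj : ∀ (a b c : ℝ) (s : Set ℝ), s ⊆ Set.Ici b → Disjoint (Set.Ico a b) s := by
    intro a b c s hs
    exact Set.disjoint_left.mpr fun x hx hx' => absurd (hs hx') (not_le.2 hx.2)
  have u1 : Set.Ico (ε+L) (ε+2*L) ∪ Set.Icc (ε+2*L) 1 = Set.Icc (ε+L) 1 :=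
    Set.Ico_union_Icc_eq_Icc (by linarith) (by rw [hL]; linarith)
  have u2 : Set.Ico ε (ε+L) ∪ Set.Icc (ε+L) 1 = Set.Icc ε 1 :=
    Set.Ico_union_Icc_eq_Icc (by linarith) (by rw [hL]; linarith)
  have u3 : Set.Ico 0 ε ∪ Set.Icc ε 1 = Set.Icc (0:ℝ) 1 :=
    Set.Ico_union_Icc_eq_Icc hε0 hε1.le
  have i2 := intOn (ε+L) (ε+2*L) 2 c2
  have i1 := intOn ε (ε+L) 1 c1
  have i0 := intOn 0 ε 0 c0
  have s1 : ∫ x in Set.Icc (ε+L) 1, g (blk ε x)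
      = L * g 2 + L * g 3 := by
    rw [← u1, setIntegral_union (dj _ _ 0 _ (fun x hx => hx.1)) measurableSet_Icc i2 i3,
      valOn _ _ (by linarith) 2 c2, v3]
    ring
  have s2 : ∫ x in Set.Icc ε 1, g (blk ε x)
      = L * g 1 + (L * g 2 + L * g 3) := by
    rw [← u2, setIntegral_union (dj _ _ 0 _ (fun x hx => hx.1)) measurableSet_Icc i1
      ((u1 ▸ (i2.union i3)) ), valOn _ _ (by linarith) 1 c1, s1]
    ring
  have s3 : ∫ x in Set.Icc (0:ℝ) 1, g (blk ε x)
      = ε * g 0 + (L * g 1 + (L * g 2 + L * g 3)) := by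
    rw [← u3, setIntegral_union (dj _ _ 0 _ (fun x hx => hx.1)) measurableSet_Icc i0
      (u2 ▸ (i1.union (u1 ▸ (i2.union i3)))), valOn _ _ hε0 0 c0, s2]
    ring
  rw [s3]; ring

def Ff (ε : ℝ) (u : ℕ → ℕ → ℝ) (i j : ℕ) : ℝ :=
  ε * (u i 0 * u j 0) + (1 - ε) / 3 * (u i 1 * u j 1 + u i 2 * u j 2 + u i 3 * u j 3)

def Gf (ε : ℝ) (k : ℕ) (u : ℕ → ℕ → ℝ) (i : ℕ) : ℝ :=
  ε * (u i 0 * Ff ε u i 0 ^ k) +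
    (1 - ε) / 3 * (u i 1 * Ff ε u i 1 ^ k + u i 2 * Ff ε u i 2 ^ k + u i 3 * Ff ε u i 3 ^ k)

lemma tT_blk (ε : ℝ) (hε0 : 0 ≤ ε) (hε1 : ε < 1) (k : ℕ) (u : ℕ → ℕ → ℝ)
    (W : ℝ → ℝ → ℝ) (hW : ∀ x y, W x y = u (blk ε x) (blk ε y)) :
    tT k W = ε * Gf ε k u 0 +
      (1 - ε) / 3 * (Gf ε k u 1 + Gf ε k u 2 + Gf ε k u 3) := by
  have hin : ∀ x y : ℝ, (∫ z in Set.Icc (0:ℝ) 1,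
      u (blk ε x) (blk ε z) * u (blk ε y) (blk ε z)) = Ff ε u (blk ε x) (blk ε y) :=
    fun x y => intA ε hε0 hε1 (fun m => u (blk ε x) m * u (blk ε y) m)
  unfold tT
  simp only [hW]
  simp only [hin]
  have hy : ∀ x : ℝ, (∫ y in Set.Icc (0:ℝ) 1,
      u (blk ε x) (blk ε y) * Ff ε u (blk ε x) (blk ε y) ^ k) = Gf ε k u (blk ε x) :=
    fun x => intA ε hε0 hε1 (fun j => u (blk ε x) j * Ff ε u (blk ε x) j ^ k)
  simp only [hy]
  exact intA ε hε0 hε1 (Gf ε k u)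

def wv (i j : ℕ) : ℝ :=
  if (i = 0 ∨ j = 0 ∨ i = j) ∧ ¬(i = 0 ∧ j = 0) then 1 else 0

/-- book densities in `W_ε`:
`t(T_k,W_ε) = 2ε(1-ε)((1-ε)/3)^k + 3((1-ε)/3)²((1+2ε)/3)^k` and
`t(T_k,1-W_ε) = ε^(k+2) + 6((1-ε)/3)^(k+2)`. -/
theorem stmt17 (ε : ℝ) (hε0 : 0 ≤ ε) (hε1 : ε < 1) (k : ℕ) (hk : 1 ≤ k) :
    tT k (Weps ε) = 2 * ε * (1 - ε) * ((1 - ε) / 3) ^ k +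
        3 * ((1 - ε) / 3) ^ 2 * ((1 + 2 * ε) / 3) ^ k ∧
    tT k (cW (Weps ε)) = ε ^ (k + 2) + 6 * ((1 - ε) / 3) ^ (k + 2) := by
  constructor
  · rw [tT_blk ε hε0 hε1 k wv (Weps ε) (fun x y => rfl)]
    have e1 : (1 + 2 * ε) / 3 = ε * (1 * 1) + (1 - ε) / 3 * (1 * 1 + 0 * 0 + 0 * 0) := by ring
    norm_num [Gf, Ff, wv]
    rw [e1]
    ring
  · rw [tT_blk ε hε0 hε1 k (fun i j => 1 - wv i j) (cW (Weps ε)) (fun x y => rfl)]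
    norm_num [Gf, Ff, wv]
    ring
end
end

section
/- There exists a graphon W and an integer k (namely k = 12 and W = W_{1/20}) such that m(T_k, W) / m(S_k, W) < 2^{−(k+1)}; hence the inequality of the key lemma fails for k = 12. -/
open MeasureTheory
noncomputable section

lemma blk_meas (ε : ℝ) : Measurable (blk ε) := by
  unfold blk
  exact Measurable.ite (measurableSet_lt measurable_id measurable_const) measurable_const <|
    Measurable.ite (measurableSet_lt measurable_id measurable_const) measurable_const <|
    Measurable.ite (measurableSet_lt measurable_id measurable_const) measurable_const
      measurable_const

lemma blk_cases (ε x : ℝ) : blk ε x = 0 ∨ blk ε x = 1 ∨ blk ε x = 2 ∨ blk ε x = 3 := by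
  unfold blk; split_ifs <;> simp

lemma blk_eq0 {x : ℝ} (h : x ∈ Set.Ioo (0:ℝ) (1/20)) : blk (1/20) x = 0 := by
  simp only [blk]; rw [if_pos h.2]

lemma blk_eq1 {x : ℝ} (h : x ∈ Set.Ioo (1/20:ℝ) (11/30)) : blk (1/20) x = 1 := by
  have h1 := h.1; have h2 := h.2
  simp only [blk]; rw [if_neg (by linarith), if_pos (by norm_num; linarith)]

lemma blk_eq2 {x : ℝ} (h : x ∈ Set.Ioo (11/30:ℝ) (41/60)) : blk (1/20) x = 2 := by
  have h1 := h.1; have h2 := h.2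
  simp only [blk]
  rw [if_neg (by norm_num; linarith), if_neg (by norm_num; linarith), if_pos (by norm_num; linarith)]

lemma blk_eq3 {x : ℝ} (h : x ∈ Set.Ioo (41/60:ℝ) 1) : blk (1/20) x = 3 := by
  have h1 := h.1; have h2 := h.2
  simp only [blk]
  rw [if_neg (by norm_num; linarith), if_neg (by norm_num; linarith), if_neg (by norm_num; linarith)]

lemma piece {p q : ℝ} (h : p ≤ q) {f : ℝ → ℝ} {c : ℝ} (hf : ∀ x ∈ Set.Ioo p q, f x = c) :
    ∫ x in Set.Ioc p q, f x = (q - p) * c := by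
  rw [MeasureTheory.integral_Ioc_eq_integral_Ioo,
    MeasureTheory.setIntegral_congr_fun measurableSet_Ioo hf,
    MeasureTheory.setIntegral_const, Real.volume_real_Ioo_of_le h,
    smul_eq_mul]

lemma intOn (g : ℕ → ℝ) : IntegrableOn (fun x => g (blk (1/20) x)) (Set.Icc (0:ℝ) 1) := by
  apply Measure.integrableOn_of_bounded (M := |g 0| + |g 1| + |g 2| + |g 3|)
  · simp [Real.volume_Icc]
  · exact ((measurable_of_countable g).comp (blk_meas _)).aestronglyMeasurable
  · refine MeasureTheory.ae_of_all _ fun x => ?_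
    rcases blk_cases (1/20) x with h|h|h|h <;> rw [h] <;> simp only [Real.norm_eq_abs] <;>
      linarith [abs_nonneg (g 0), abs_nonneg (g 1), abs_nonneg (g 2), abs_nonneg (g 3)]

lemma intg (g : ℕ → ℝ) :
    ∫ x in Set.Icc (0:ℝ) 1, g (blk (1/20) x)
      = (1/20) * g 0 + (19/60) * g 1 + (19/60) * g 2 + (19/60) * g 3 := by
  have sub : ∀ p q : ℝ, 0 ≤ p → q ≤ 1 → Set.Ioc p q ⊆ Set.Icc (0:ℝ) 1 :=
    fun p q h0 h1 x hx => ⟨le_trans h0 hx.1.le, le_trans hx.2 h1⟩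
  have h1 : Set.Ioc (0:ℝ) 1 = Set.Ioc 0 (1/20) ∪ Set.Ioc (1/20) 1 :=
    (Set.Ioc_union_Ioc_eq_Ioc (by norm_num) (by norm_num)).symm
  have h2 : Set.Ioc (1/20:ℝ) 1 = Set.Ioc (1/20) (11/30) ∪ Set.Ioc (11/30) 1 :=
    (Set.Ioc_union_Ioc_eq_Ioc (by norm_num) (by norm_num)).symm
  have h3 : Set.Ioc (11/30:ℝ) 1 = Set.Ioc (11/30) (41/60) ∪ Set.Ioc (41/60) 1 :=
    (Set.Ioc_union_Ioc_eq_Ioc (by norm_num) (by norm_num)).symm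
  rw [MeasureTheory.integral_Icc_eq_integral_Ioc, h1,
    MeasureTheory.setIntegral_union (Set.Ioc_disjoint_Ioc_of_le le_rfl) measurableSet_Ioc
      ((intOn g).mono_set (sub _ _ (by norm_num) (by norm_num)))
      ((intOn g).mono_set (sub _ _ (by norm_num) (by norm_num))), h2,
    MeasureTheory.setIntegral_union (Set.Ioc_disjoint_Ioc_of_le le_rfl) measurableSet_Ioc
      ((intOn g).mono_set (sub _ _ (by norm_num) (by norm_num)))
      ((intOn g).mono_set (sub _ _ (by norm_num) (by norm_num))), h3,
    MeasureTheory.setIntegral_union (Set.Ioc_disjoint_Ioc_of_le le_rfl) measurableSet_Ioc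
      ((intOn g).mono_set (sub _ _ (by norm_num) (by norm_num)))
      ((intOn g).mono_set (sub _ _ (by norm_num) (by norm_num))),
    piece (by norm_num) (fun x hx => by rw [blk_eq0 hx]),
    piece (by norm_num) (fun x hx => by rw [blk_eq1 hx]),
    piece (by norm_num) (fun x hx => by rw [blk_eq2 hx]),
    piece (by norm_num) (fun x hx => by rw [blk_eq3 hx])]
  ring

def w : ℕ → ℕ → ℝ := fun i j =>
  if (i = 0 ∨ j = 0 ∨ i = j) ∧ ¬(i = 0 ∧ j = 0) then 1 else 0

def wc : ℕ → ℕ → ℝ := fun i j => 1 - w i j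

def Fb (v : ℕ → ℕ → ℝ) (i : ℕ) : ℝ :=
  (1/20) * v i 0 + (19/60) * v i 1 + (19/60) * v i 2 + (19/60) * v i 3

def Gb (v : ℕ → ℕ → ℝ) (i j : ℕ) : ℝ :=
  (1/20) * (v i 0 * v j 0) + (19/60) * (v i 1 * v j 1) + (19/60) * (v i 2 * v j 2)
    + (19/60) * (v i 3 * v j 3)

def Hb (v : ℕ → ℕ → ℝ) (i : ℕ) : ℝ :=
  (1/20) * (v i 0 * Gb v i 0 ^ 12) + (19/60) * (v i 1 * Gb v i 1 ^ 12)
    + (19/60) * (v i 2 * Gb v i 2 ^ 12) + (19/60) * (v i 3 * Gb v i 3 ^ 12)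

lemma tS_eq (v : ℕ → ℕ → ℝ) (V : ℝ → ℝ → ℝ)
    (hV : ∀ x y, V x y = v (blk (1/20) x) (blk (1/20) y)) :
    tS 12 V = (1/20) * Fb v 0 ^ 12 + (19/60) * Fb v 1 ^ 12 + (19/60) * Fb v 2 ^ 12
      + (19/60) * Fb v 3 ^ 12 := by
  unfold tS
  have hd : ∀ x : ℝ, (∫ y in Set.Icc (0:ℝ) 1, V x y) = Fb v (blk (1/20) x) := by
    intro x
    simp only [hV]
    exact intg fun j => v (blk (1/20) x) j
  simp only [hd]
  exact intg fun i => Fb v i ^ 12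

lemma tT_eq (v : ℕ → ℕ → ℝ) (V : ℝ → ℝ → ℝ)
    (hV : ∀ x y, V x y = v (blk (1/20) x) (blk (1/20) y)) :
    tT 12 V = (1/20) * Hb v 0 + (19/60) * Hb v 1 + (19/60) * Hb v 2 + (19/60) * Hb v 3 := by
  unfold tT
  have h3 : ∀ x y : ℝ, (∫ z in Set.Icc (0:ℝ) 1, V x z * V y z)
      = Gb v (blk (1/20) x) (blk (1/20) y) := by
    intro x y
    simp only [hV]
    exact intg fun l => v (blk (1/20) x) l * v (blk (1/20) y) l
  have h2 : ∀ x : ℝ,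
      (∫ y in Set.Icc (0:ℝ) 1, V x y * (∫ z in Set.Icc (0:ℝ) 1, V x z * V y z) ^ 12)
        = Hb v (blk (1/20) x) := by
    intro x
    have h3' : ∀ i j : ℕ,
        (∫ z in Set.Icc (0:ℝ) 1, v i (blk (1/20) z) * v j (blk (1/20) z)) = Gb v i j :=
      fun i j => intg fun l => v i l * v j l
    simp only [hV, h3']
    exact intg fun j => v (blk (1/20) x) j * Gb v (blk (1/20) x) j ^ 12
  simp only [h2]
  exact intg fun i => Hb v i

/-- The key lemma fails for `k = 12`: the graphon `W_{1/20}` satisfies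
`m(T_12,W_{1/20})/m(S_12,W_{1/20}) < 2^(-13)`. -/
theorem stmt18 :
    ∃ (W : ℝ → ℝ → ℝ) (k : ℕ), IsGraphon W ∧ k = 12 ∧ W = Weps (1/20) ∧
      mT k W / mS k W < (2:ℝ) ^ (-((k:ℤ) + 1)) := by
  have hb : Measurable (blk (1/20 : ℝ)) := blk_meas _
  have hw : ∀ x y : ℝ, Weps (1/20) x y = w (blk (1/20) x) (blk (1/20) y) := fun _ _ => rfl
  have hwc : ∀ x y : ℝ, cW (Weps (1/20)) x y = wc (blk (1/20) x) (blk (1/20) y) := fun _ _ => rfl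
  refine ⟨Weps (1/20), 12, ⟨?_, ?_, ?_⟩, rfl, rfl, ?_⟩
  · have : Function.uncurry (Weps (1/20))
        = (fun q : ℕ × ℕ => w q.1 q.2) ∘ (fun p : ℝ × ℝ => (blk (1/20) p.1, blk (1/20) p.2)) :=
      rfl
    rw [this]
    exact (measurable_of_countable _).comp ((hb.comp measurable_fst).prodMk (hb.comp measurable_snd))
  · intro x y
    simp only [Weps]
    exact if_congr (by omega) rfl rfl
  · intro x y
    simp only [Weps]
    split_ifs <;> norm_num
  · rw [mT, mS, tS_eq w _ hw, tS_eq wc _ hwc, tT_eq w _ hw, tT_eq wc _ hwc]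
    simp only [Hb, Gb, Fb, wc, w]
    norm_num
end
end
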